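/- arXiv:2110.02008 — 10 statements merged into one kernel-verified Lean document; each statement's English description precedes it below -/
import Mathlib

section
/- Let q = 2^ℓ and let r, j, l be nonnegative integers with l < j. If d ∈ (Z_q)^m admits some i ∈ (Z_q)^m with i ≤₂ d (componentwise binary dominance) and deg(i) = (q − r) + j·q, then there also exists i' ∈ (Z_q)^m with i' ≤₂ d and deg(i') = (q − r) + l·q. -/
private lemma tb_false_of_lt {a k : ℕ} (h : a < 2 ^ k) : a.testBit k = false := by
  by_contra hc
  have := Nat.ge_two_pow_of_testBit (x := a) (i := k) (by simpa using hc)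
  omega

private lemma lt_pow_of_tb_false {a k : ℕ} (ha : a < 2 ^ (k + 1))
    (hb : a.testBit k = false) : a < 2 ^ k := by
  apply Nat.lt_pow_two_of_testBit
  intro i hi
  rcases Nat.eq_or_lt_of_le hi with rfl | hlt
  · exact hb
  · exact tb_false_of_lt (lt_of_lt_of_le ha (Nat.pow_le_pow_right (by norm_num) hlt))

private lemma clear_bit {a k : ℕ} (ha : a < 2 ^ (k + 1)) (hb : a.testBit k = true) :
    a - 2 ^ k < 2 ^ k ∧ ∀ j, (a - 2 ^ k).testBit j = true → a.testBit j = true := by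
  have hge : 2 ^ k ≤ a := Nat.ge_two_pow_of_testBit hb
  have hlt : a - 2 ^ k < 2 ^ k := by
    have : 2 ^ (k + 1) = 2 ^ k + 2 ^ k := by ring
    omega
  refine ⟨hlt, fun j hj => ?_⟩
  have ha' : a = 2 ^ k + (a - 2 ^ k) := by omega
  rcases lt_trichotomy j k with h | rfl | h
  · rw [ha', Nat.testBit_two_pow_add_gt h]; exact hj
  · exact hb
  · have : (a - 2 ^ k).testBit j = false :=
      tb_false_of_lt (lt_of_lt_of_le hlt (Nat.pow_le_pow_right (by norm_num) h.le))
    simp [this] at hj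

/-- Subtract exactly `2^k` from the sum by clearing bits. -/
private lemma step (m : ℕ) : ∀ (k : ℕ) (i : Fin m → ℕ), (∀ t, i t < 2 ^ k) →
    2 ^ k ≤ ∑ t, i t →
    ∃ i' : Fin m → ℕ, (∀ t j, (i' t).testBit j = true → (i t).testBit j = true) ∧
      ∑ t, i' t = ∑ t, i t - 2 ^ k := by
  intro k
  induction k with
  | zero =>
    intro i hi hs
    have : ∑ t, i t = 0 := Finset.sum_eq_zero (fun t _ => Nat.lt_one_iff.mp (hi t))
    omega
  | succ k ih =>
    intro i hi hs
    have hpow : 2 ^ (k + 1) = 2 ^ k + 2 ^ k := by ring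
    by_cases h2 : ∃ t1 t2 : Fin m, t1 ≠ t2 ∧ (i t1).testBit k = true ∧ (i t2).testBit k = true
    · obtain ⟨t1, t2, hne, hb1, hb2⟩ := h2
      obtain ⟨hl1, hd1⟩ := clear_bit (hi t1) hb1
      obtain ⟨hl2, hd2⟩ := clear_bit (hi t2) hb2
      have hge1 : 2 ^ k ≤ i t1 := Nat.ge_two_pow_of_testBit hb1
      have hge2 : 2 ^ k ≤ i t2 := Nat.ge_two_pow_of_testBit hb2
      refine ⟨Function.update (Function.update i t1 (i t1 - 2 ^ k)) t2 (i t2 - 2 ^ k),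
        ?_, ?_⟩
      · intro t j hj
        rcases eq_or_ne t t2 with rfl | h'
        · rw [Function.update_self] at hj; exact hd2 j hj
        · rw [Function.update_of_ne h'] at hj
          rcases eq_or_ne t t1 with rfl | h''
          · rw [Function.update_self] at hj; exact hd1 j hj
          · rw [Function.update_of_ne h''] at hj; exact hj
      · rw [Finset.sum_update_of_mem (Finset.mem_univ _),
          Finset.sum_update_of_mem (by simp [hne] : t1 ∈ Finset.univ \ {t2})]
        have hsplit : ∑ t, i t =
            i t2 + (i t1 + ∑ x ∈ (Finset.univ \ {t2}) \ {t1}, i x) := by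
          rw [Finset.sum_eq_add_sum_sdiff_singleton_of_mem (Finset.mem_univ t2),
            Finset.sum_eq_add_sum_sdiff_singleton_of_mem
              (by simp [hne] : t1 ∈ Finset.univ \ {t2})]
        omega
    · push_neg at h2
      by_cases h1 : ∃ t1 : Fin m, (i t1).testBit k = true
      · obtain ⟨t1, hb1⟩ := h1
        obtain ⟨hl1, hd1⟩ := clear_bit (hi t1) hb1
        have hge1 : 2 ^ k ≤ i t1 := Nat.ge_two_pow_of_testBit hb1
        set i1 : Fin m → ℕ := Function.update i t1 (i t1 - 2 ^ k) with hi1def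
        have hi1le : ∀ t j, (i1 t).testBit j = true → (i t).testBit j = true := by
          intro t j hj
          rcases eq_or_ne t t1 with rfl | h'
          · rw [hi1def, Function.update_self] at hj; exact hd1 j hj
          · rwa [hi1def, Function.update_of_ne h'] at hj
        have hi1lt : ∀ t, i1 t < 2 ^ k := by
          intro t
          rcases eq_or_ne t t1 with rfl | h'
          · rw [hi1def, Function.update_self]; exact hl1
          · rw [hi1def, Function.update_of_ne h']
            have : (i t).testBit k = false := by
              by_contra hc
              exact h2 t t1 h' (by simpa using hc) hb1
            exact lt_pow_of_tb_false (hi t) this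
        have hs1 : ∑ t, i1 t = ∑ t, i t - 2 ^ k := by
          rw [hi1def, Finset.sum_update_of_mem (Finset.mem_univ _)]
          have := Finset.sum_eq_add_sum_sdiff_singleton_of_mem (Finset.mem_univ t1) i
          omega
        have hs1' : 2 ^ k ≤ ∑ t, i1 t := by omega
        obtain ⟨i2, h2le, h2s⟩ := ih i1 hi1lt hs1'
        exact ⟨i2, fun t j hj => hi1le t j (h2le t j hj), by omega⟩
      · push_neg at h1
        have hlt' : ∀ t, i t < 2 ^ k := fun t =>
          lt_pow_of_tb_false (hi t) (by simpa using h1 t)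
        obtain ⟨i1, h1le, h1s⟩ := ih i hlt' (by omega)
        have hi1lt : ∀ t, i1 t < 2 ^ k := fun t =>
          lt_of_le_of_lt (Nat.le_of_testBit (h1le t)) (hlt' t)
        obtain ⟨i2, h2le, h2s⟩ := ih i1 hi1lt (by omega)
        exact ⟨i2, fun t j hj => h1le t j (h2le t j hj), by omega⟩

private lemma descend (m k : ℕ) : ∀ (n : ℕ) (i : Fin m → ℕ), (∀ t, i t < 2 ^ k) →
    n * 2 ^ k ≤ ∑ t, i t →
    ∃ i' : Fin m → ℕ, (∀ t j, (i' t).testBit j = true → (i t).testBit j = true) ∧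
      ∑ t, i' t = ∑ t, i t - n * 2 ^ k := by
  intro n
  induction n with
  | zero => exact fun i hi _ => ⟨i, fun t j h => h, by simp⟩
  | succ n ih =>
    intro i hi hs
    have hmul : (n + 1) * 2 ^ k = n * 2 ^ k + 2 ^ k := by ring
    obtain ⟨i1, h1le, h1s⟩ := step m k i hi (by omega)
    have hi1lt : ∀ t, i1 t < 2 ^ k := fun t =>
      lt_of_le_of_lt (Nat.le_of_testBit (h1le t)) (hi t)
    obtain ⟨i2, h2le, h2s⟩ := ih i1 hi1lt (by omega)
    exact ⟨i2, fun t j hj => h1le t j (h2le t j hj), by omega⟩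

/-- If `d ∈ (Z_q)^m` admits a witness `i ≤₂ d` with `deg(i) = (q - r) + j·q`, then for any
`l < j` it admits a witness `i' ≤₂ d` with `deg(i') = (q - r) + l·q`. -/
theorem decrease_weight (ℓ m r j l q : ℕ) (hq : q = 2^ℓ) (hr : r ≤ q) (hlj : l < j)
    (d : Fin m → ℕ) (hd : ∀ t, d t < q)
    (i : Fin m → ℕ) (hi : ∀ t, i t < q)
    (hle : ∀ t k, (i t).testBit k = true → (d t).testBit k = true)
    (hsum : ∑ t, i t = (q - r) + j * q) :
    ∃ i' : Fin m → ℕ, (∀ t, i' t < q) ∧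
      (∀ t k, (i' t).testBit k = true → (d t).testBit k = true) ∧
      ∑ t, i' t = (q - r) + l * q := by
  subst hq
  have hjl : (j - l) * 2 ^ ℓ ≤ j * 2 ^ ℓ := Nat.mul_le_mul_right _ (by omega)
  have hjsplit : j * 2 ^ ℓ = (j - l) * 2 ^ ℓ + l * 2 ^ ℓ := by
    rw [← Nat.add_mul]; congr 1; omega
  obtain ⟨i', h'le, h's⟩ := descend m ℓ (j - l) i hi (by omega)
  refine ⟨i', fun t => lt_of_le_of_lt (Nat.le_of_testBit (h'le t)) (hi t),
    fun t k hk => hle t k (h'le t k hk), by omega⟩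
end

section
/- For m = 2 and q = 2^ℓ, let s_0(ℓ) be the number of pairs d = (d_1, d_2) ∈ Z_q² such that there exists i = (i_1, i_2) with i ≤₂ d and i_1 + i_2 = q − 1. Then s_0(ℓ) = 3^ℓ. -/
/-- If `a + b = 2^n - 1`, the bits of `a` and `b` cover all positions below `n`. -/
lemma cover_of_add_eq (n : ℕ) : ∀ a b : ℕ, a + b = 2^n - 1 →
    ∀ k, k < n → (a.testBit k || b.testBit k) = true := by
  induction n with
  | zero => intro a b _ k hk; omega
  | succ n ih =>
    intro a b hab k hk
    have h2 : 0 < 2^n := Nat.pow_pos (by norm_num)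
    have hmod : a % 2 + b % 2 = 1 := by
      have := Nat.pow_succ 2 n ▸ hab
      omega
    have hdiv : a / 2 + b / 2 = 2^n - 1 := by
      have h1 := Nat.div_add_mod a 2
      have h2' := Nat.div_add_mod b 2
      have := Nat.pow_succ 2 n ▸ hab
      omega
    cases k with
    | zero =>
      simp only [Nat.testBit_zero]
      rcases Nat.mod_two_eq_zero_or_one a with h | h <;> simp [h] <;> omega
    | succ k =>
      simp only [Nat.testBit_succ]
      exact ih _ _ hdiv k (by omega)

/-- Bits of the complement `2^n - 1 - a` within `n` bits. -/
lemma testBit_compl (n : ℕ) : ∀ a : ℕ, a < 2^n →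
    ∀ k, (2^n - 1 - a).testBit k = (decide (k < n) && !(a.testBit k)) := by
  induction n with
  | zero =>
    intro a ha k
    interval_cases a
    simp [Nat.testBit]
  | succ n ih =>
    intro a ha k
    have h2 : 0 < 2^n := Nat.pow_pos (by norm_num)
    have hq : a / 2 < 2^n := by
      have := Nat.pow_succ 2 n ▸ ha
      omega
    have hrepr : 2^(n+1) - 1 - a = 2 * (2^n - 1 - a/2) + (1 - a % 2) := by
      have h1 := Nat.div_add_mod a 2
      have hm : a % 2 < 2 := Nat.mod_lt _ (by norm_num)
      have hp : 2^(n+1) = 2 * 2^n := by ring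
      omega
    cases k with
    | zero =>
      rw [hrepr]
      simp only [Nat.testBit_zero, Nat.mul_add_mod]
      rcases Nat.mod_two_eq_zero_or_one a with h | h <;> simp [h]
    | succ k =>
      rw [hrepr]
      simp only [Nat.testBit_succ]
      have hdiv : (2 * (2^n - 1 - a/2) + (1 - a % 2)) / 2 = 2^n - 1 - a/2 := by
        have hm : a % 2 < 2 := Nat.mod_lt _ (by norm_num)
        omega
      rw [hdiv, ih _ hq k]
      simp [Nat.succ_lt_succ_iff]

/-- The defining condition is equivalent to `p.1 ||| p.2 = 2^ℓ - 1`. -/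
lemma cond_iff (ℓ : ℕ) (a b : ℕ) (ha : a < 2^ℓ) (hb : b < 2^ℓ) :
    (∃ i1 i2 : ℕ, (∀ k, i1.testBit k = true → a.testBit k = true) ∧
        (∀ k, i2.testBit k = true → b.testBit k = true) ∧
        i1 + i2 = 2^ℓ - 1) ↔ a ||| b = 2^ℓ - 1 := by
  constructor
  · rintro ⟨i1, i2, h1, h2, hsum⟩
    apply Nat.eq_of_testBit_eq
    intro k
    rw [Nat.testBit_lor, Nat.testBit_two_pow_sub_one]
    by_cases hk : k < ℓ
    · have := cover_of_add_eq ℓ i1 i2 hsum k hk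
      rcases Bool.or_eq_true_iff.1 this with h | h
      · simp [h1 k h, hk]
      · simp [h2 k h, hk]
    · have hka : a.testBit k = false :=
        Nat.testBit_lt_two_pow (lt_of_lt_of_le ha (Nat.pow_le_pow_right (by norm_num) (by omega)))
      have hkb : b.testBit k = false :=
        Nat.testBit_lt_two_pow (lt_of_lt_of_le hb (Nat.pow_le_pow_right (by norm_num) (by omega)))
      simp [hka, hkb, hk]
  · intro hor
    refine ⟨a, 2^ℓ - 1 - a, fun k h => h, fun k h => ?_, by omega⟩
    rw [testBit_compl ℓ a ha k] at h
    have hk : k < ℓ := by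
      by_contra hk
      simp [hk] at h
    have hna : a.testBit k = false := by
      rcases Bool.and_eq_true_iff.1 h with ⟨_, h2⟩
      simpa using h2
    have : (a ||| b).testBit k = true := by
      rw [hor, Nat.testBit_two_pow_sub_one]; simp [hk]
    rw [Nat.testBit_lor, hna] at this
    simpa using this

/-- The relevant Finset of pairs. -/
def badF (ℓ : ℕ) : Finset (ℕ × ℕ) :=
  (Finset.range (2^ℓ) ×ˢ Finset.range (2^ℓ)).filter (fun p => p.1 ||| p.2 = 2^ℓ - 1)

lemma lor_digits (a b x y : ℕ) (hx : x < 2) (hy : y < 2) :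
    (2*a + x) ||| (2*b + y) = 2*(a ||| b) + (x ||| y) := by
  apply Nat.eq_of_testBit_eq
  intro k
  have hxy : (x ||| y) < 2 := by interval_cases x <;> interval_cases y <;> decide
  cases k with
  | zero =>
    simp only [Nat.testBit_lor, Nat.testBit_zero]
    interval_cases x <;> interval_cases y <;> simp [Nat.mul_add_mod] <;> omega
  | succ k =>
    rw [Nat.testBit_lor]
    simp only [Nat.testBit_succ]
    have d1 : (2*a + x) / 2 = a := by omega
    have d2 : (2*b + y) / 2 = b := by omega
    have d3 : (2*(a ||| b) + (x ||| y)) / 2 = a ||| b := by omega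
    rw [d1, d2, d3, Nat.testBit_lor]

lemma lor_one_iff (x y : ℕ) (hx : x < 2) (hy : y < 2) :
    (x ||| y) = 1 ↔ (x = 1 ∨ y = 1) := by
  interval_cases x <;> interval_cases y <;> decide

lemma badF_card (ℓ : ℕ) : (badF ℓ).card = 3^ℓ := by
  induction ℓ with
  | zero => decide
  | succ ℓ ih =>
    have key : (badF (ℓ+1)).card =
        (((Finset.range 2 ×ˢ Finset.range 2).filter (fun b => b ≠ ((0:ℕ),(0:ℕ)))) ×ˢ badF ℓ).card := by
      apply Finset.card_bij' (fun p _ => ((p.1 % 2, p.2 % 2), (p.1 / 2, p.2 / 2)))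
        (fun bp _ => (2 * bp.2.1 + bp.1.1, 2 * bp.2.2 + bp.1.2))
      case hi =>
        rintro ⟨a, b⟩ hp
        simp only [badF, Finset.mem_filter, Finset.mem_product, Finset.mem_range] at hp
        obtain ⟨⟨ha, hb⟩, hor⟩ := hp
        have ea := Nat.div_add_mod a 2
        have eb := Nat.div_add_mod b 2
        have hma : a % 2 < 2 := Nat.mod_lt _ (by norm_num)
        have hmb : b % 2 < 2 := Nat.mod_lt _ (by norm_num)
        have hlor : 2*((a/2) ||| (b/2)) + ((a%2) ||| (b%2)) = 2^(ℓ+1) - 1 := by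
          rw [← lor_digits _ _ _ _ hma hmb]
          rw [show 2*(a/2) + a%2 = a by omega, show 2*(b/2) + b%2 = b by omega]
          exact hor
        have hxy : ((a%2) ||| (b%2)) < 2 := by
          rcases Nat.mod_two_eq_zero_or_one a with h | h <;>
            rcases Nat.mod_two_eq_zero_or_one b with h' | h' <;> simp [h, h']
        have h2 : 0 < 2^ℓ := Nat.pow_pos (by norm_num)
        have hps : 2^(ℓ+1) = 2 * 2^ℓ := by ring
        have hdl : ((a/2) ||| (b/2)) = 2^ℓ - 1 := by omega
        have hxy1 : ((a%2) ||| (b%2)) = 1 := by omega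
        simp only [Finset.mem_product, Finset.mem_filter, Finset.mem_range, badF]
        refine ⟨⟨⟨hma, hmb⟩, ?_⟩, ⟨⟨by omega, by omega⟩, hdl⟩⟩
        intro hc
        rw [Prod.ext_iff] at hc
        simp only at hc
        rw [(lor_one_iff _ _ hma hmb)] at hxy1
        omega
      case hj =>
        rintro ⟨⟨x, y⟩, ⟨a, b⟩⟩ hbp
        simp only [Finset.mem_product, Finset.mem_filter, Finset.mem_range, badF] at hbp
        obtain ⟨⟨⟨hx, hy⟩, hne⟩, ⟨ha, hb⟩, hor⟩ := hbp
        have hxy1 : (x ||| y) = 1 := by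
          rw [lor_one_iff _ _ hx hy]
          by_contra hc
          push_neg at hc
          exact hne (by ext <;> simp <;> omega)
        simp only [badF, Finset.mem_filter, Finset.mem_product, Finset.mem_range]
        have hps : 2^(ℓ+1) = 2 * 2^ℓ := by ring
        have h2 : 0 < 2^ℓ := Nat.pow_pos (by norm_num)
        refine ⟨⟨by omega, by omega⟩, ?_⟩
        rw [lor_digits _ _ _ _ hx hy, hor, hxy1]
        omega
      case left_inv =>
        rintro ⟨a, b⟩ _
        have := Nat.div_add_mod a 2
        have := Nat.div_add_mod b 2
        ext <;> simp <;> omega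
      case right_inv =>
        rintro ⟨⟨x, y⟩, ⟨a, b⟩⟩ hbp
        simp only [Finset.mem_product, Finset.mem_filter, Finset.mem_range] at hbp
        obtain ⟨⟨⟨hx, hy⟩, _⟩, _⟩ := hbp
        ext <;> simp <;> omega
    rw [key, Finset.card_product, ih]
    have : ((Finset.range 2 ×ˢ Finset.range 2).filter
        (fun b => b ≠ ((0:ℕ),(0:ℕ)))).card = 3 := by decide
    rw [this]
    ring

/-- For `m = 2`, `q = 2^ℓ`: the number of pairs `d ∈ Z_q²` admitting `i ≤₂ d` with
`i₁ + i₂ = q − 1` equals `3^ℓ`. -/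
theorem count_bad_pairs (ℓ : ℕ) :
    Set.ncard {p : ℕ × ℕ | p.1 < 2^ℓ ∧ p.2 < 2^ℓ ∧
      ∃ i1 i2 : ℕ, (∀ k, i1.testBit k = true → p.1.testBit k = true) ∧
        (∀ k, i2.testBit k = true → p.2.testBit k = true) ∧
        i1 + i2 = 2^ℓ - 1} = 3^ℓ := by
  have hset : {p : ℕ × ℕ | p.1 < 2^ℓ ∧ p.2 < 2^ℓ ∧
      ∃ i1 i2 : ℕ, (∀ k, i1.testBit k = true → p.1.testBit k = true) ∧
        (∀ k, i2.testBit k = true → p.2.testBit k = true) ∧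
        i1 + i2 = 2^ℓ - 1} = ↑(badF ℓ) := by
    ext ⟨a, b⟩
    simp only [Set.mem_setOf_eq, badF, Finset.coe_filter, Finset.mem_product,
      Finset.mem_range, Set.mem_setOf_eq]
    constructor
    · rintro ⟨ha, hb, hcond⟩
      exact ⟨⟨ha, hb⟩, (cond_iff ℓ a b ha hb).1 hcond⟩
    · rintro ⟨⟨ha, hb⟩, hor⟩
      exact ⟨ha, hb, (cond_iff ℓ a b ha hb).2 hor⟩
  rw [hset, Set.ncard_coe_finset, badF_card]
end

section
/- Let q be a power of two. For every univariate polynomial f(X) over F_q and s a power of two with s ≤ q, the remainder g(X) of f(X) modulo X^{qs} + X^s satisfies: for every i with deg(f) − qs + s < i < qs, the coefficient of X^i in f equals the coefficient of X^i in g. -/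
open Polynomial

/-- For `q, s` powers of two with `s ≤ q` and a field with `q` elements, the remainder `g`
of `f` modulo `X^{qs} + X^s` has the same coefficients as `f` in the range
`deg(f) − qs + s < i < qs`. -/
theorem coeff_mod_XqsXs (ℓ t q s : ℕ) (hq : q = 2^ℓ) (hs : s = 2^t) (hsq : s ≤ q)
    (F : Type) [Field F] [Fintype F] (hF : Fintype.card F = q)
    (f : Polynomial F) :
    ∀ i : ℕ, f.natDegree + s < i + q*s → i < q*s →
      f.coeff i = (f % (X^(q*s) + X^s)).coeff i := by
  intro i h1 h2
  have hq2 : 2 ≤ q := by rw [← hF]; exact Fintype.one_lt_card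
  have hs1 : 1 ≤ s := by rw [hs]; exact Nat.one_le_two_pow
  have hslt : s < q * s := by nlinarith
  set p : Polynomial F := X^(q*s) + X^s with hp
  have hdl : (X^s : Polynomial F).degree < (X^(q*s) : Polynomial F).degree := by
    rw [degree_X_pow, degree_X_pow]; exact_mod_cast hslt
  have hmonic : p.Monic := (monic_X_pow (q*s)).add_of_left hdl
  have hpd : p.natDegree = q * s := by
    rw [hp, natDegree_add_eq_left_of_degree_lt hdl, natDegree_X_pow]
  set h : Polynomial F := f /ₘ p with hh
  rw [← modByMonic_eq_mod f hmonic]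
  have hdecomp := modByMonic_add_div f p
  have key : (p * h).coeff i = 0 := by
    by_cases hc : f.degree < p.degree
    · rw [hh, (divByMonic_eq_zero_iff hmonic).2 hc, mul_zero, coeff_zero]
    · push_neg at hc
      have hf0 : f ≠ 0 := by
        intro h0
        rw [h0, degree_zero] at hc
        exact absurd (le_bot_iff.1 hc) (hmonic.ne_zero ∘ degree_eq_bot.1)
      have hle : q * s ≤ f.natDegree := by
        rw [← hpd]; exact natDegree_le_natDegree hc
      have hdeg : h.natDegree = f.natDegree - q * s := by
        rw [hh, natDegree_divByMonic f hmonic, hpd]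
      rw [hp, add_mul, coeff_add, X_pow_mul, X_pow_mul, coeff_mul_X_pow', coeff_mul_X_pow',
        if_neg (by omega)]
      split_ifs with hsi
      · rw [coeff_eq_zero_of_natDegree_lt (by omega)]; simp
      · simp
  conv_lhs => rw [← hdecomp]
  rw [coeff_add, key, add_zero]
end

section
/- The evaluation map on type-s monomials is injective: let q and s be powers of two with s ≤ q. If f ∈ F_q[X₁,...,X_m] is a nonzero linear combination of monomials X^d with Σ_j ⌊d_j/q⌋ ≤ s − 1 and each d_j < qs, then there exists a point x ∈ F_q^m and a multi-index i with deg(i) < s such that the i-th Hasse derivative f^{(i)}(x) ≠ 0. -/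
/-- The `i`-th (Hasse) derivative of a multivariate polynomial: the coefficient of `Y^i`
in `f(X + Y)`, given explicitly by `f^{(i)} = ∑_d C(d, i) f_d X^{d−i}`. -/
noncomputable def mvHasseDeriv {m : ℕ} {F : Type} [CommRing F]
    (i : Fin m →₀ ℕ) (f : MvPolynomial (Fin m) F) : MvPolynomial (Fin m) F :=
  ∑ d ∈ f.support,
    MvPolynomial.monomial (d - i) (((∏ j, (d j).choose (i j) : ℕ) : F) * f.coeff d)

open MvPolynomial

variable {m : ℕ} {F : Type} [CommRing F]

lemma mvHasseDeriv_superset (i : Fin m →₀ ℕ) (f : MvPolynomial (Fin m) F)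
    (S : Finset (Fin m →₀ ℕ)) (hS : f.support ⊆ S) :
    mvHasseDeriv i f =
      ∑ d ∈ S, monomial (d - i) (((∏ j, (d j).choose (i j) : ℕ) : F) * f.coeff d) := by
  refine Finset.sum_subset hS fun d _ hd => ?_
  rw [notMem_support_iff.mp hd, mul_zero, map_zero]

lemma mvHasseDeriv_add (i : Fin m →₀ ℕ) (f g : MvPolynomial (Fin m) F) :
    mvHasseDeriv i (f + g) = mvHasseDeriv i f + mvHasseDeriv i g := by
  classical
  set S := (f + g).support ∪ (f.support ∪ g.support) with hSdef
  rw [mvHasseDeriv_superset i (f+g) S Finset.subset_union_left,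
    mvHasseDeriv_superset i f S (Finset.subset_union_left.trans Finset.subset_union_right),
    mvHasseDeriv_superset i g S (Finset.subset_union_right.trans Finset.subset_union_right),
    ← Finset.sum_add_distrib]
  refine Finset.sum_congr rfl fun d _ => ?_
  rw [coeff_add, mul_add, map_add]

lemma mvHasseDeriv_zero_poly (i : Fin m →₀ ℕ) : mvHasseDeriv i (0 : MvPolynomial (Fin m) F) = 0 := by
  simp [mvHasseDeriv]

lemma mvHasseDeriv_monomial (i d : Fin m →₀ ℕ) (c : F) :
    mvHasseDeriv i (monomial d c) =
      monomial (d - i) (((∏ j, (d j).choose (i j) : ℕ) : F) * c) := by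
  classical
  by_cases hc : c = 0
  · simp [hc, mvHasseDeriv_zero_poly]
  · rw [mvHasseDeriv, support_monomial, if_neg hc, Finset.sum_singleton, coeff_monomial, if_pos rfl]

lemma mvHasseDeriv_zero (f : MvPolynomial (Fin m) F) : mvHasseDeriv 0 f = f := by
  conv_rhs => rw [← support_sum_monomial_coeff f]
  rw [mvHasseDeriv]
  refine Finset.sum_congr rfl fun d _ => ?_
  simp

noncomputable def liftCoeffs (i : Fin m →₀ ℕ) (x : Fin m → F)
    (P : Polynomial (MvPolynomial (Fin m) F)) : Polynomial F :=
  P.sum fun e c => Polynomial.monomial e (eval x (mvHasseDeriv i c))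

lemma liftCoeffs_coeff (i : Fin m →₀ ℕ) (x : Fin m → F)
    (P : Polynomial (MvPolynomial (Fin m) F)) (e : ℕ) :
    (liftCoeffs i x P).coeff e = eval x (mvHasseDeriv i (P.coeff e)) := by
  classical
  rw [liftCoeffs, Polynomial.sum_def, Polynomial.finset_sum_coeff]
  simp only [Polynomial.coeff_monomial]
  rw [Finset.sum_ite_eq' P.support e (fun n => eval x (mvHasseDeriv i (P.coeff n)))]
  split_ifs with h
  · rfl
  · rw [Polynomial.notMem_support_iff.mp h, mvHasseDeriv_zero_poly, map_zero]

lemma liftCoeffs_add (i : Fin m →₀ ℕ) (x : Fin m → F)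
    (P Q : Polynomial (MvPolynomial (Fin m) F)) :
    liftCoeffs i x (P + Q) = liftCoeffs i x P + liftCoeffs i x Q := by
  ext e
  simp only [liftCoeffs_coeff, Polynomial.coeff_add, mvHasseDeriv_add, map_add]

lemma finSuccEquiv_monomial (d : Fin (m+1) →₀ ℕ) (c : F) :
    finSuccEquiv F m (monomial d c) =
      Polynomial.monomial (d 0) (monomial (Finsupp.tail d) c) := by
  rw [finSuccEquiv_apply, coe_eval₂Hom, eval₂_monomial]
  rw [Finsupp.prod_fintype _ _ (fun j => pow_zero _), Fin.prod_univ_succ]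
  simp only [Fin.cases_zero, Fin.cases_succ, RingHom.coe_comp, Function.comp_apply]
  simp only [← map_pow, ← map_prod]
  rw [mul_left_comm, ← Polynomial.C_mul, ← Polynomial.C_mul_X_pow_eq_monomial, mul_comm]
  congr 1
  rw [monomial_eq, Finsupp.prod_fintype _ _ (fun j => pow_zero _)]
  simp [Finsupp.tail_apply]

lemma transfer (f : MvPolynomial (Fin (m+1)) F) (i' : Fin m →₀ ℕ) (k : ℕ)
    (x' : Fin m → F) (x₀ : F) :
    Polynomial.eval x₀ (Polynomial.hasseDeriv k (liftCoeffs i' x' (finSuccEquiv F m f))) =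
      eval (Fin.cons x₀ x') (mvHasseDeriv (Finsupp.cons k i') f) := by
  classical
  induction f using MvPolynomial.induction_on' with
  | add p q hp hq =>
    rw [map_add, liftCoeffs_add, map_add, Polynomial.eval_add, hp, hq,
      mvHasseDeriv_add, map_add]
  | monomial d c =>
    rw [finSuccEquiv_monomial, liftCoeffs, Polynomial.sum_monomial_index _ _
      (by simp [mvHasseDeriv_zero_poly]),
      Polynomial.hasseDeriv_monomial, Polynomial.eval_monomial,
      mvHasseDeriv_monomial, eval_monomial, mvHasseDeriv_monomial, eval_monomial]
    rw [Finsupp.prod_fintype _ _ (fun j => pow_zero _),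
      Finsupp.prod_fintype _ _ (fun j => pow_zero _), Fin.prod_univ_succ, Fin.prod_univ_succ]
    simp only [Finsupp.sub_apply, Pi.sub_apply, Finsupp.cons_zero, Finsupp.cons_succ, Finsupp.tail_apply,
      Fin.cons_zero, Fin.cons_succ]
    simp only [Finsupp.coe_tsub, Pi.sub_apply, Finsupp.cons_zero, Finsupp.cons_succ,
      Finsupp.tail_apply]
    push_cast
    ring

open Polynomial in
lemma univ_vanish {F : Type} [Field F] [Fintype F] (h : Polynomial F) (b : ℕ)
    (hdeg : ∀ n, Fintype.card F * (b+1) ≤ n → h.coeff n = 0)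
    (hvan : ∀ x : F, ∀ k ≤ b, (Polynomial.hasseDeriv k h).eval x = 0) : h = 0 := by
  classical
  by_contra hne
  have hdvd : ∀ x : F, (Polynomial.X - Polynomial.C x)^(b+1) ∣ h := by
    intro x
    conv_rhs => rw [← Polynomial.sum_taylor_eq h x]
    rw [Polynomial.sum_def]
    refine Finset.dvd_sum fun i hi => ?_
    have hib : b + 1 ≤ i := by
      by_contra hlt
      push_neg at hlt
      have : (taylor x h).coeff i = 0 := by
        rw [Polynomial.taylor_coeff]
        exact hvan x i (Nat.lt_succ_iff.mp hlt)
      exact (Polynomial.mem_support_iff.mp hi) this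
    exact Dvd.dvd.mul_left (pow_dvd_pow _ hib) _
  have hprod : (∏ x : F, (Polynomial.X - Polynomial.C x)^(b+1)) ∣ h := by
    refine Fintype.prod_dvd_of_coprime ?_ hdvd
    intro a c hac
    exact (Polynomial.pairwise_coprime_X_sub_C (Function.injective_id) hac).pow
  have hdegprod : (∏ x : F, (Polynomial.X - Polynomial.C x)^(b+1)).natDegree = Fintype.card F * (b+1) := by
    rw [Polynomial.natDegree_prod _ _ (fun x _ => pow_ne_zero _ (Polynomial.X_sub_C_ne_zero x))]
    simp [Polynomial.natDegree_pow, Finset.sum_const, mul_comm]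
  have hle := Polynomial.natDegree_le_of_dvd hprod hne
  rw [hdegprod] at hle
  exact Polynomial.leadingCoeff_ne_zero.mpr hne (hdeg _ hle)

lemma main_lemma {F : Type} [Field F] [Fintype F] :
    ∀ (m s : ℕ), 1 ≤ s → ∀ f : MvPolynomial (Fin m) F, f ≠ 0 →
      (∀ d ∈ f.support, (∑ j, d j / Fintype.card F) ≤ s - 1) →
      ∃ (x : Fin m → F) (i : Fin m →₀ ℕ), (∑ j, i j) < s ∧
        MvPolynomial.eval x (mvHasseDeriv i f) ≠ 0 := by
  intro m
  induction m with
  | zero =>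
    intro s hs f hf _
    refine ⟨Fin.elim0, 0, by simpa using (show 0 < s by omega), ?_⟩
    rw [mvHasseDeriv_zero, MvPolynomial.eq_C_of_isEmpty f, eval_C]
    intro h0
    exact hf (by rw [MvPolynomial.eq_C_of_isEmpty f, h0, map_zero])
  | succ m ihm =>
    intro s hs f hf hsupp
    by_contra hcon
    push_neg at hcon
    set q := Fintype.card F with hqdef
    have hq0 : 0 < q := Fintype.card_pos
    have claim : ∀ n e, s ≤ e / q + n → (finSuccEquiv F m f).coeff e = 0 := by
      intro n
      induction n with
      | zero =>
        intro e he
        by_contra hg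
        obtain ⟨d', hd'⟩ := Finset.nonempty_iff_ne_empty.mpr
          (fun hemp => hg (MvPolynomial.support_eq_empty.mp hemp))
        have hmem : Finsupp.cons e d' ∈ f.support := mem_support_coeff_finSuccEquiv.mp hd'
        have h2 := hsupp _ hmem
        rw [Fin.sum_univ_succ] at h2
        simp only [Finsupp.cons_zero, Finsupp.cons_succ] at h2
        simp only [Nat.add_zero] at he
        generalize hB : e / q = B at he h2
        omega
      | succ n ih =>
        intro e he
        by_cases hb : s ≤ e / q + n
        · exact ih e hb
        push_neg at hb
        set b := e / q with hbdef
        by_contra hg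
        have hsupp' : ∀ d' ∈ ((finSuccEquiv F m f).coeff e).support,
            (∑ j, d' j / q) ≤ (n+1) - 1 := by
          intro d' hd'
          have h2 := hsupp _ (mem_support_coeff_finSuccEquiv.mp hd')
          rw [Fin.sum_univ_succ] at h2
          simp only [Finsupp.cons_zero, Finsupp.cons_succ] at h2
          rw [← hbdef] at h2
          omega
        obtain ⟨x', i', hi', hev⟩ := ihm (n+1) (Nat.succ_le_succ (Nat.zero_le n)) _ hg hsupp'
        have hzero : liftCoeffs i' x' (finSuccEquiv F m f) = 0 := by
          refine univ_vanish _ b ?_ ?_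
          · intro n' hn'
            rw [liftCoeffs_coeff]
            have hc : (finSuccEquiv F m f).coeff n' = 0 := by
              refine ih n' ?_
              have hdiv : b + 1 ≤ n' / q :=
                (Nat.le_div_iff_mul_le hq0).mpr (by rw [mul_comm]; exact hn')
              generalize hC : n' / q = C at hdiv
              omega
            rw [hc, mvHasseDeriv_zero_poly, map_zero]
          · intro x₀ k hk
            rw [transfer]
            refine hcon _ _ ?_
            rw [Fin.sum_univ_succ]
            simp only [Finsupp.cons_zero, Finsupp.cons_succ]
            omega
        apply hev
        have hle := liftCoeffs_coeff i' x' (finSuccEquiv F m f) e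
        rw [hzero, Polynomial.coeff_zero] at hle
        exact hle.symm
    have hP : finSuccEquiv F m f = 0 := by
      ext e
      rw [claim s e (Nat.le_add_left s _), Polynomial.coeff_zero]
    have : f = 0 := by
      have h0' := congrArg (finSuccEquiv F m).symm hP
      simpa using h0'
    exact hf this

/-- No nonzero linear combination of type-`s` monomials vanishes together with all its
Hasse derivatives of order `< s` at every point of `F_q^m`. -/
theorem type_s_evaluation_injective (ℓ t m q s : ℕ) (hq : q = 2^ℓ) (hs : s = 2^t)
    (hsq : s ≤ q) (F : Type) [Field F] [Fintype F] (hF : Fintype.card F = q)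
    (f : MvPolynomial (Fin m) F) (hf : f ≠ 0)
    (hsupp : ∀ d ∈ f.support, (∀ j, d j < q*s) ∧ (∑ j, d j / q) ≤ s - 1) :
    ∃ (x : Fin m → F) (i : Fin m →₀ ℕ), (∑ j, i j) < s ∧
      MvPolynomial.eval x (mvHasseDeriv i f) ≠ 0 := by
  have hs1 : 1 ≤ s := by rw [hs]; exact Nat.one_le_two_pow
  exact main_lemma m s hs1 f hf (fun d hd => by rw [hF]; exact (hsupp d hd).2)
end

section
/- Base case m = 1 of injectivity: let q and s be powers of two with s ≤ q. If f ∈ F_q[X] is a nonzero polynomial of degree at most qs − 1, then there exist x ∈ F_q and i < s with f^{(i)}(x) ≠ 0. -/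
open Polynomial

/-- A nonzero univariate polynomial of degree at most `qs − 1` over `F_q` has a nonzero
Hasse derivative of order `< s` at some point. -/
theorem univariate_multiplicity_nonvanishing (ℓ t q s : ℕ) (hq : q = 2^ℓ) (hs : s = 2^t)
    (hsq : s ≤ q) (F : Type) [Field F] [Fintype F] (hF : Fintype.card F = q)
    (f : Polynomial F) (hf : f ≠ 0) (hdeg : f.natDegree ≤ q*s - 1) :
    ∃ (x : F) (i : ℕ), i < s ∧ (Polynomial.hasseDeriv i f).eval x ≠ 0 := by
  classical
  by_contra h
  push_neg at h
  -- every x is a root of multiplicity at least s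
  have hmult : ∀ x : F, s ≤ f.rootMultiplicity x := by
    intro x
    rw [Polynomial.le_rootMultiplicity_iff hf]
    have hx : (X : F[X]) ^ s ∣ taylor x f := by
      rw [Polynomial.X_pow_dvd_iff]
      intro d hd
      rw [Polynomial.taylor_coeff]
      exact h x d hd
    obtain ⟨g, hg⟩ := hx
    have : f = taylor (-x) (taylor x f) := by
      rw [Polynomial.taylor_taylor]; simp
    rw [this, hg, Polynomial.taylor_apply, Polynomial.mul_comp, Polynomial.pow_comp,
      Polynomial.X_comp]
    exact ⟨g.comp (X + C (-x)), by rw [map_neg, ← sub_eq_add_neg]⟩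
  -- count roots
  have hcount : ∀ x : F, s ≤ f.roots.count x := by
    intro x; rw [Polynomial.count_roots]; exact hmult x
  have hcard : q * s ≤ Multiset.card f.roots := by
    have h1 : ∑ x : F, f.roots.count x = Multiset.card f.roots := by
      rw [← Multiset.toFinset_sum_count_eq]
      refine (Finset.sum_subset (Finset.subset_univ _) (fun x _ hx => ?_)).symm
      rw [Multiset.count_eq_zero]
      exact fun hmem => hx (Multiset.mem_toFinset.2 hmem)
    calc q * s = ∑ _x : F, s := by rw [Finset.sum_const, Finset.card_univ, hF, smul_eq_mul]
    _ ≤ ∑ x : F, f.roots.count x := Finset.sum_le_sum (fun x _ => hcount x)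
    _ = Multiset.card f.roots := h1
  have := f.card_roots'
  have hqs : 0 < q * s := by subst hq hs; positivity
  omega
end

section
/- Multiplicity Schwartz–Zippel: let f ∈ F_q[X₁,...,X_m] be a nonzero polynomial of total degree at most d. Then the number of points x ∈ F_q^m such that f^{(i)}(x) = 0 for all multi-indices i with deg(i) < s is at most ⌊d·q^{m−1}/s⌋. -/
namespace MSZ
open MvPolynomial Polynomial
variable {m : ℕ} {F : Type} [CommRing F]

lemma mvHasseDeriv_zero (i : Fin m →₀ ℕ) : mvHasseDeriv i (0 : MvPolynomial (Fin m) F) = 0 := by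
  simp [mvHasseDeriv]

lemma coeff_mvHasseDeriv (i : Fin m →₀ ℕ) (f : MvPolynomial (Fin m) F) (e : Fin m →₀ ℕ) :
    (mvHasseDeriv i f).coeff e =
      ((∏ j, (e j + i j).choose (i j) : ℕ) : F) * f.coeff (e + i) := by
  unfold mvHasseDeriv
  rw [MvPolynomial.coeff_sum]
  rw [Finset.sum_eq_single (e + i)]
  · simp [MvPolynomial.coeff_monomial, add_tsub_cancel_right]
  · intro d hd hne
    rw [MvPolynomial.coeff_monomial]
    split_ifs with h
    · have hex : ∃ j, d j < i j := by
        by_contra hc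
        push_neg at hc
        have hle : i ≤ d := (Finsupp.le_iff i d).mpr fun j _ => hc j
        have : d - i + i = d := tsub_add_cancel_of_le hle
        rw [h] at this
        exact hne this.symm
      obtain ⟨j, hj⟩ := hex
      have : (∏ j, (d j).choose (i j)) = 0 :=
        Finset.prod_eq_zero (Finset.mem_univ j) (Nat.choose_eq_zero_of_lt hj)
      rw [this]
      simp
    · rfl
  · intro h
    rw [MvPolynomial.notMem_support_iff.mp h]
    simp

/-- `f` vanishes at `x` with multiplicity at least `s`. -/
def zeroLe (f : MvPolynomial (Fin m) F) (x : Fin m → F) (s : ℕ) : Prop :=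
  ∀ i : Fin m →₀ ℕ, (∑ j, i j) < s → MvPolynomial.eval x (mvHasseDeriv i f) = 0

lemma zeroLe_zero (f : MvPolynomial (Fin m) F) (x : Fin m → F) : zeroLe f x 0 :=
  fun _ h => absurd h (Nat.not_lt_zero _)

lemma zeroLe_le_totalDegree {f : MvPolynomial (Fin m) F} {x : Fin m → F} {s : ℕ}
    (hf : f ≠ 0) (h : zeroLe f x s) : s ≤ f.totalDegree := by
  by_contra hc
  push_neg at hc
  have hsupp : f.support.Nonempty := MvPolynomial.support_nonempty.mpr hf
  obtain ⟨i, hi, hdeg⟩ := Finset.exists_mem_eq_sup f.support hsupp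
    (fun s0 => Finsupp.sum s0 fun _ e => e)
  have hdeg' : (Finsupp.sum i fun _ e => e) = f.totalDegree := hdeg.symm
  have hconst : mvHasseDeriv i f = MvPolynomial.C (f.coeff i) := by
    ext e
    rw [coeff_mvHasseDeriv, MvPolynomial.coeff_C]
    by_cases he : e = 0
    · subst he
      simp
    · rw [if_neg (Ne.symm he)]
      have : f.coeff (e + i) = 0 := by
        by_contra hc2
        have hmem : e + i ∈ f.support := MvPolynomial.mem_support_iff.mpr hc2
        have hle := MvPolynomial.le_totalDegree hmem
        have hsum : (Finsupp.sum (e + i) fun _ e => e)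
            = (Finsupp.sum e fun _ e => e) + (Finsupp.sum i fun _ e => e) :=
          Finsupp.sum_add_index' (fun _ => rfl) (fun _ _ _ => rfl)
        have hepos : 0 < Finsupp.sum e fun _ e => e := by
          rcases Finset.Nonempty.exists_mem (Finsupp.support_nonempty_iff.mpr he) with ⟨j, hj⟩
          have := Finsupp.mem_support_iff.mp hj
          calc 0 < e j := Nat.pos_of_ne_zero this
          _ ≤ Finsupp.sum e fun _ e => e := Finset.single_le_sum (fun _ _ => Nat.zero_le _) hj
        omega
      rw [this, mul_zero]
  have hisum : (∑ j, i j) < s := by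
    have : (Finsupp.sum i fun _ e => e) = ∑ j, i j := Finsupp.sum_fintype _ _ (fun _ => rfl)
    omega
  have := h i hisum
  rw [hconst] at this
  simp at this
  exact MvPolynomial.mem_support_iff.mp hi this

/-- the multiplicity of `f` at `x` -/
noncomputable def multAt (f : MvPolynomial (Fin m) F) (x : Fin m → F) : ℕ :=
  @Nat.findGreatest (zeroLe f x) (Classical.decPred _) f.totalDegree

lemma zeroLe_multAt (f : MvPolynomial (Fin m) F) (x : Fin m → F) :
    zeroLe f x (multAt f x) := by
  letI : DecidablePred (zeroLe f x) := Classical.decPred _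
  exact Nat.findGreatest_spec (Nat.zero_le _) (zeroLe_zero f x)

lemma multAt_le_totalDegree (f : MvPolynomial (Fin m) F) (x : Fin m → F) :
    multAt f x ≤ f.totalDegree := by
  letI : DecidablePred (zeroLe f x) := Classical.decPred _
  exact Nat.findGreatest_le _

lemma le_multAt {f : MvPolynomial (Fin m) F} {x : Fin m → F} {s : ℕ}
    (hf : f ≠ 0) (h : zeroLe f x s) : s ≤ multAt f x := by
  letI : DecidablePred (zeroLe f x) := Classical.decPred _
  exact Nat.le_findGreatest (zeroLe_le_totalDegree hf h) h

lemma not_zeroLe_succ_multAt {f : MvPolynomial (Fin m) F} (hf : f ≠ 0) (x : Fin m → F) :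
    ¬ zeroLe f x (multAt f x + 1) := fun h => absurd (le_multAt hf h) (by omega)

lemma exists_nonzero_deriv {f : MvPolynomial (Fin m) F} (hf : f ≠ 0) (x : Fin m → F) :
    ∃ i : Fin m →₀ ℕ, (∑ j, i j) ≤ multAt f x ∧
      MvPolynomial.eval x (mvHasseDeriv i f) ≠ 0 := by
  have := not_zeroLe_succ_multAt hf x
  unfold zeroLe at this
  push_neg at this
  obtain ⟨i, hi, hne⟩ := this
  exact ⟨i, by omega, hne⟩

lemma finsupp_cons_add (k k' : ℕ) (i i' : Fin m →₀ ℕ) :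
    Finsupp.cons k i + Finsupp.cons k' i' = Finsupp.cons (k + k') (i + i') := by
  ext j
  rcases Fin.eq_zero_or_eq_succ j with h | ⟨j', rfl⟩
  · subst h; simp [Finsupp.cons_zero]
  · simp [Finsupp.cons_succ]

lemma sum_finsupp_cons (k : ℕ) (i : Fin m →₀ ℕ) :
    (∑ j, (Finsupp.cons k i) j) = k + ∑ j, i j := by
  rw [Fin.sum_univ_succ]
  simp [Finsupp.cons_zero, Finsupp.cons_succ]

lemma finSuccEquiv_mvHasseDeriv_cons (f : MvPolynomial (Fin (m + 1)) F) (i : Fin m →₀ ℕ)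
    (k n : ℕ) :
    (MvPolynomial.finSuccEquiv F m (mvHasseDeriv (Finsupp.cons k i) f)).coeff n
      = MvPolynomial.C (((n + k).choose k : ℕ) : F)
        * mvHasseDeriv i ((MvPolynomial.finSuccEquiv F m f).coeff (n + k)) := by
  ext e
  rw [MvPolynomial.finSuccEquiv_coeff_coeff, coeff_mvHasseDeriv, MvPolynomial.coeff_C_mul,
    coeff_mvHasseDeriv, MvPolynomial.finSuccEquiv_coeff_coeff, finsupp_cons_add]
  rw [Fin.prod_univ_succ]
  simp only [Finsupp.cons_zero, Finsupp.cons_succ, Finsupp.coe_add, Pi.add_apply]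
  push_cast
  ring

/-- the restriction of the `i`-th partial Hasse derivative to the line `y ↦ (y, a)` -/
noncomputable def gPoly (p : Polynomial (MvPolynomial (Fin m) F)) (i : Fin m →₀ ℕ)
    (a : Fin m → F) : Polynomial F :=
  ∑ n ∈ p.support, Polynomial.C (MvPolynomial.eval a (mvHasseDeriv i (p.coeff n)))
    * Polynomial.X ^ n

lemma coeff_gPoly (p : Polynomial (MvPolynomial (Fin m) F)) (i : Fin m →₀ ℕ)
    (a : Fin m → F) (n : ℕ) :
    (gPoly p i a).coeff n = MvPolynomial.eval a (mvHasseDeriv i (p.coeff n)) := by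
  unfold gPoly
  rw [Polynomial.finset_sum_coeff]
  simp only [Polynomial.coeff_C_mul, Polynomial.coeff_X_pow]
  rw [Finset.sum_eq_single n]
  · by_cases h : n ∈ p.support
    · simp
    · simp [Polynomial.notMem_support_iff.mp h, mvHasseDeriv_zero]
  · intro b _ hb; simp [hb, Ne.symm hb]
  · intro h
    simp [Polynomial.notMem_support_iff.mp h, mvHasseDeriv_zero]

lemma hasseDeriv_gPoly (f : MvPolynomial (Fin (m + 1)) F) (i : Fin m →₀ ℕ) (k : ℕ)
    (a : Fin m → F) :
    Polynomial.hasseDeriv k (gPoly (MvPolynomial.finSuccEquiv F m f) i a)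
      = Polynomial.map (MvPolynomial.eval a)
          (MvPolynomial.finSuccEquiv F m (mvHasseDeriv (Finsupp.cons k i) f)) := by
  ext n
  rw [Polynomial.hasseDeriv_coeff, coeff_gPoly, Polynomial.coeff_map,
    finSuccEquiv_mvHasseDeriv_cons]
  simp [mul_comm]

lemma eval_cons_mvHasseDeriv (f : MvPolynomial (Fin (m + 1)) F) (i : Fin m →₀ ℕ) (k : ℕ)
    (a : Fin m → F) (b : F) :
    Polynomial.eval b (Polynomial.hasseDeriv k (gPoly (MvPolynomial.finSuccEquiv F m f) i a))
      = MvPolynomial.eval (Fin.cons b a) (mvHasseDeriv (Finsupp.cons k i) f) := by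
  rw [hasseDeriv_gPoly, ← MvPolynomial.eval_eq_eval_mv_eval']

/-- univariate: if the first `r` Hasse derivatives vanish at `b`, then
`rootMultiplicity b g ≥ r`. -/
lemma le_rootMultiplicity_of_hasseDeriv {g : Polynomial F} (hg : g ≠ 0) {b : F} {r : ℕ}
    (h : ∀ k < r, Polynomial.eval b (Polynomial.hasseDeriv k g) = 0) :
    r ≤ Polynomial.rootMultiplicity b g := by
  rw [Polynomial.le_rootMultiplicity_iff hg]
  have htay : ∀ k < r, (Polynomial.taylor b g).coeff k = 0 := by
    intro k hk
    rw [Polynomial.taylor_coeff]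
    exact h k hk
  have := Polynomial.sum_taylor_eq g b
  rw [← this]
  rw [Polynomial.sum_def]
  apply Finset.dvd_sum
  intro n hn
  have hrn : r ≤ n := by
    by_contra hc
    push_neg at hc
    exact Polynomial.mem_support_iff.mp hn (htay n hc)
  exact Dvd.dvd.mul_left (pow_dvd_pow _ hrn) _

section field
variable {F : Type} [Field F] [Fintype F]

lemma sum_rootMultiplicity_le {g : Polynomial F} (hg : g ≠ 0) :
    ∑ b : F, Polynomial.rootMultiplicity b g ≤ g.natDegree := by
  classical
  have h1 : ∀ b : F, Polynomial.rootMultiplicity b g = g.roots.count b := by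
    intro b; rw [Polynomial.count_roots]
  calc ∑ b : F, Polynomial.rootMultiplicity b g = ∑ b ∈ g.roots.toFinset, g.roots.count b := by
        rw [← Finset.sum_subset (Finset.subset_univ g.roots.toFinset)]
        · exact Finset.sum_congr rfl fun b _ => h1 b
        · intro x _ hx
          rw [h1]
          exact Multiset.count_eq_zero.mpr fun hmem => hx (Multiset.mem_toFinset.mpr hmem)
    _ = Multiset.card g.roots := Multiset.toFinset_sum_count_eq _
    _ ≤ g.natDegree := Polynomial.card_roots' g

lemma line_bound (f : MvPolynomial (Fin (m + 1)) F) (hf : f ≠ 0) (a : Fin m → F) :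
    ∑ b : F, multAt f (Fin.cons b a)
      ≤ Fintype.card F * multAt ((MvPolynomial.finSuccEquiv F m f).leadingCoeff) a
        + (MvPolynomial.finSuccEquiv F m f).natDegree := by
  set p := MvPolynomial.finSuccEquiv F m f with hp_def
  have hp : p ≠ 0 := fun h => hf ((map_eq_zero_iff _ (AlgEquiv.injective _)).mp h)
  set t := p.natDegree with ht_def
  set ft := p.leadingCoeff with hft_def
  have hft : ft ≠ 0 := Polynomial.leadingCoeff_ne_zero.mpr hp
  set w := multAt ft a with hw_def
  obtain ⟨i, hideg, hine⟩ := exists_nonzero_deriv hft a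
  set g := gPoly p i a with hg_def
  have hgt : g.coeff t = MvPolynomial.eval a (mvHasseDeriv i ft) := coeff_gPoly p i a t
  have hg0 : g ≠ 0 := fun h => hine (by rw [← hgt, h, Polynomial.coeff_zero])
  have hdeg : g.natDegree ≤ t := by
    rw [Polynomial.natDegree_le_iff_coeff_eq_zero]
    intro n hn
    rw [coeff_gPoly, Polynomial.coeff_eq_zero_of_natDegree_lt hn, mvHasseDeriv_zero, map_zero]
  have hmb : ∀ b : F, multAt f (Fin.cons b a) ≤ w + Polynomial.rootMultiplicity b g := by
    intro b
    have hz := zeroLe_multAt f (Fin.cons b a)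
    have hders : ∀ k < multAt f (Fin.cons b a) - w,
        Polynomial.eval b (Polynomial.hasseDeriv k g) = 0 := by
      intro k hk
      rw [hg_def, eval_cons_mvHasseDeriv]
      apply hz
      rw [sum_finsupp_cons]
      omega
    have := le_rootMultiplicity_of_hasseDeriv hg0 hders
    omega
  calc ∑ b : F, multAt f (Fin.cons b a)
      ≤ ∑ b : F, (w + Polynomial.rootMultiplicity b g) :=
        Finset.sum_le_sum fun b _ => hmb b
    _ = Fintype.card F * w + ∑ b : F, Polynomial.rootMultiplicity b g := by
        rw [Finset.sum_add_distrib, Finset.sum_const, Finset.card_univ, smul_eq_mul]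
    _ ≤ Fintype.card F * w + t :=
        Nat.add_le_add_left (le_trans (sum_rootMultiplicity_le hg0) hdeg) _

lemma key (q : ℕ) (hF : Fintype.card F = q) :
    ∀ (m : ℕ) (f : MvPolynomial (Fin m) F), f ≠ 0 →
      q * ∑ x : Fin m → F, multAt f x ≤ f.totalDegree * q ^ m := by
  intro m
  induction m with
  | zero =>
    intro f hf
    have hdeg0 : f.totalDegree = 0 := by
      apply Nat.le_zero.mp
      apply Finset.sup_le
      intro i _
      have : i = 0 := Subsingleton.elim _ _
      simp [this]
    have : ∀ x : Fin 0 → F, multAt f x = 0 := fun x =>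
      Nat.le_zero.mp (le_trans (multAt_le_totalDegree f x) (le_of_eq hdeg0))
    simp [this, hdeg0]
  | succ m ih =>
    intro f hf
    set p := MvPolynomial.finSuccEquiv F m f with hp_def
    have hp : p ≠ 0 := fun h => hf ((map_eq_zero_iff _ (AlgEquiv.injective _)).mp h)
    set t := p.natDegree with ht_def
    set ft := p.leadingCoeff with hft_def
    have hft : ft ≠ 0 := Polynomial.leadingCoeff_ne_zero.mpr hp
    have hcoeff : p.coeff t ≠ 0 := hft
    have hdegs : ft.totalDegree + t ≤ f.totalDegree :=
      MvPolynomial.totalDegree_coeff_finSuccEquiv_add_le f t hcoeff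
    have hsum : ∑ x : Fin (m + 1) → F, multAt f x
        = ∑ y : F × (Fin m → F), multAt f (Fin.cons y.1 y.2) :=
      (Fintype.sum_equiv (Fin.consEquiv fun _ => F)
        (fun y => multAt f (Fin.cons y.1 y.2)) (fun x => multAt f x) (fun y => rfl)).symm
    rw [hsum, Fintype.sum_prod_type_right]
    have hline : ∀ a : Fin m → F, ∑ b : F, multAt f (Fin.cons b a) ≤ q * multAt ft a + t := by
      intro a
      have := line_bound f hf a
      rwa [hF] at this
    have hcard : Fintype.card (Fin m → F) = q ^ m := by
      rw [Fintype.card_fun, Fintype.card_fin, hF]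
    calc q * ∑ a : Fin m → F, ∑ b : F, multAt f (Fin.cons b a)
        ≤ q * ∑ a : Fin m → F, (q * multAt ft a + t) :=
          Nat.mul_le_mul_left _ (Finset.sum_le_sum fun a _ => hline a)
      _ = q * (q * ∑ a : Fin m → F, multAt ft a) + (q ^ m * t) * q := by
          rw [Finset.sum_add_distrib, Finset.sum_const, Finset.card_univ, smul_eq_mul, hcard,
            ← Finset.mul_sum]
          ring
      _ ≤ q * (ft.totalDegree * q ^ m) + (q ^ m * t) * q := by
          exact Nat.add_le_add_right (Nat.mul_le_mul_left _ (ih ft hft)) _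
      _ = (ft.totalDegree + t) * q ^ (m + 1) := by ring
      _ ≤ f.totalDegree * q ^ (m + 1) := Nat.mul_le_mul_right _ hdegs

end field
end MSZ

/-- Multiplicity Schwartz–Zippel: a nonzero polynomial of total degree at most `d` vanishes
with multiplicity at least `s` on at most `⌊d·q^{m−1}/s⌋` points of `F_q^m`. -/
theorem multiplicity_schwartz_zippel (m q s d : ℕ) (hs : 0 < s)
    (F : Type) [Field F] [Fintype F] (hF : Fintype.card F = q)
    (f : MvPolynomial (Fin m) F) (hf : f ≠ 0) (hdeg : f.totalDegree ≤ d) :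
    Set.ncard {x : Fin m → F | ∀ i : Fin m →₀ ℕ, (∑ j, i j) < s →
      MvPolynomial.eval x (mvHasseDeriv i f) = 0} ≤ d * q^(m-1) / s := by
  classical
  have hq : 0 < q := hF ▸ Fintype.card_pos
  have hbound : ∑ x : Fin m → F, MSZ.multAt f x ≤ d * q ^ (m - 1) := by
    cases m with
    | zero =>
      calc ∑ x : Fin 0 → F, MSZ.multAt f x ≤ ∑ _x : Fin 0 → F, f.totalDegree :=
            Finset.sum_le_sum fun x _ => MSZ.multAt_le_totalDegree f x
        _ = Fintype.card (Fin 0 → F) * f.totalDegree := by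
            rw [Finset.sum_const, Finset.card_univ, smul_eq_mul]
        _ = f.totalDegree := by
            rw [Fintype.card_fun, Fintype.card_fin, pow_zero, one_mul]
        _ ≤ d * q ^ (0 - 1) := by simpa using hdeg
    | succ m' =>
      have hkey := MSZ.key q hF (m' + 1) f hf
      have h2 : f.totalDegree * q ^ (m' + 1) ≤ q * (d * q ^ m') := by
        calc f.totalDegree * q ^ (m' + 1) ≤ d * q ^ (m' + 1) :=
              Nat.mul_le_mul_right _ hdeg
          _ = q * (d * q ^ m') := by ring
      have := le_trans hkey h2
      have h3 := Nat.le_of_mul_le_mul_left this hq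
      simpa using h3
  set S := {x : Fin m → F | ∀ i : Fin m →₀ ℕ, (∑ j, i j) < s →
      MvPolynomial.eval x (mvHasseDeriv i f) = 0} with hS_def
  rw [Set.ncard_eq_toFinset_card']
  rw [Nat.le_div_iff_mul_le hs]
  have hmult : ∀ x ∈ S.toFinset, s ≤ MSZ.multAt f x := fun x hx =>
    MSZ.le_multAt hf (Set.mem_toFinset.mp hx)
  calc S.toFinset.card * s = ∑ _x ∈ S.toFinset, s := by
        rw [Finset.sum_const, smul_eq_mul]
    _ ≤ ∑ x ∈ S.toFinset, MSZ.multAt f x := Finset.sum_le_sum hmult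
    _ ≤ ∑ x : Fin m → F, MSZ.multAt f x :=
        Finset.sum_le_sum_of_subset (Finset.subset_univ _)
    _ ≤ d * q ^ (m - 1) := hbound
end

section
/- Distance of lifted RS codes: let f ∈ F_q[X₁,...,X_m] be nonzero such that for every affine line L in F_q^m, the restriction f|_L agrees as a function with a univariate polynomial of degree less than q − r (with 1 ≤ r < q). If f(w₀) ≠ 0 for some w₀ ∈ F_q^m, then the number of points a ∈ F_q^m with f(a) ≠ 0 is at least 1 + r·q^{m−1}. -/
open Finset

/-- Distance of lifted RS codes: if every restriction of `f` to an affine line agrees with a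
univariate polynomial of degree less than `q − r`, and `f(w₀) ≠ 0`, then `f` is nonzero at
at least `1 + r·q^{m−1}` points. -/
theorem lifted_RS_distance (m q r : ℕ) (hm : 1 ≤ m) (hr : 1 ≤ r) (hrq : r < q)
    (F : Type) [Field F] [Fintype F] (hF : Fintype.card F = q)
    (f : MvPolynomial (Fin m) F)
    (hline : ∀ w v : Fin m → F, ∃ g : Polynomial F,
      g.degree < ((q - r : ℕ) : WithBot ℕ) ∧
      ∀ t : F, MvPolynomial.eval (fun j => w j + t * v j) f = g.eval t)
    (w₀ : Fin m → F) (hw₀ : MvPolynomial.eval w₀ f ≠ 0) :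
    1 + r * q^(m-1) ≤ Set.ncard {a : Fin m → F | MvPolynomial.eval a f ≠ 0} := by
  classical
  have hq1 : 1 < q := lt_of_le_of_lt hr hrq
  -- per-direction bound
  have key : ∀ v : Fin m → F,
      r ≤ (univ.filter fun t : F => t ≠ 0 ∧
        MvPolynomial.eval (fun j => w₀ j + t * v j) f ≠ 0).card := by
    intro v
    obtain ⟨g, hdeg, hg⟩ := hline w₀ v
    have hg0 : g.eval 0 ≠ 0 := by
      have := hg 0
      simp only [zero_mul, add_zero] at this
      rwa [← this]
    have hgne : g ≠ 0 := by
      intro h; rw [h] at hg0; simp at hg0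
    have hnd : g.natDegree < q - r := by
      rwa [Polynomial.natDegree_lt_iff_degree_lt hgne]
    set Z : Finset F := univ.filter (fun t => g.eval t = 0 ∨ t = 0) with hZ
    have hZsub : Z ⊆ insert 0 g.roots.toFinset := by
      intro t ht
      simp only [hZ, mem_filter, mem_univ, true_and] at ht
      rcases ht with h | h
      · exact mem_insert_of_mem (by
          simp [Multiset.mem_toFinset, Polynomial.mem_roots hgne, Polynomial.IsRoot, h])
      · simp [h]
    have hZcard : Z.card ≤ q - r :=
      calc Z.card ≤ (insert 0 g.roots.toFinset).card := card_le_card hZsub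
        _ ≤ g.roots.toFinset.card + 1 := card_insert_le _ _
        _ ≤ Multiset.card g.roots + 1 :=
            Nat.add_le_add_right (Multiset.toFinset_card_le _) 1
        _ ≤ g.natDegree + 1 := Nat.add_le_add_right (Polynomial.card_roots' g) 1
        _ ≤ q - r := hnd
    have hcompl : (univ.filter fun t : F => t ≠ 0 ∧
        MvPolynomial.eval (fun j => w₀ j + t * v j) f ≠ 0) = univ \ Z := by
      ext t
      simp only [mem_filter, mem_univ, true_and, mem_sdiff, hZ, not_or]
      constructor
      · rintro ⟨h1, h2⟩
        exact ⟨fun hgt => h2 (by rw [hg t]; exact hgt), h1⟩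
      · rintro ⟨h1, h2⟩
        exact ⟨h2, by rw [hg t]; exact h1⟩
    rw [hcompl, card_sdiff_of_subset (subset_univ _), card_univ, hF]
    omega
  -- the pair set
  set S : (Fin m → F) → Finset F := fun v => univ.filter fun t : F => t ≠ 0 ∧
      MvPolynomial.eval (fun j => w₀ j + t * v j) f ≠ 0 with hS
  set V : Finset (Fin m → F) := univ.filter (fun v => v ≠ 0) with hV
  set P : Finset ((Fin m → F) × F) := V.biUnion (fun v => (S v).image fun t => (v, t)) with hP
  have hPmem : ∀ p : (Fin m → F) × F, p ∈ P ↔ p.1 ≠ 0 ∧ p.2 ≠ 0 ∧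
      MvPolynomial.eval (fun j => w₀ j + p.2 * p.1 j) f ≠ 0 := by
    rintro ⟨v, t⟩
    simp only [hP, mem_biUnion, hV, mem_filter, mem_univ, true_and, mem_image,
      hS, Prod.mk.injEq]
    constructor
    · rintro ⟨v', hv', t', ⟨ht1, ht2⟩, rfl, rfl⟩
      exact ⟨hv', ht1, ht2⟩
    · rintro ⟨h1, h2, h3⟩
      exact ⟨v, h1, t, ⟨h2, h3⟩, rfl, rfl⟩
  -- lower bound on |P|
  have hVcard : V.card = q ^ m - 1 := by
    rw [hV, filter_ne', card_erase_of_mem (mem_univ _), card_univ, Fintype.card_fun, hF,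
      Fintype.card_fin]
  have hPlow : (q ^ m - 1) * r ≤ P.card := by
    rw [hP, card_biUnion]
    · calc (q ^ m - 1) * r = ∑ _v ∈ V, r := by rw [sum_const, hVcard, smul_eq_mul]
        _ ≤ ∑ v ∈ V, ((S v).image fun t => (v, t)).card := by
            refine sum_le_sum fun v _ => ?_
            rw [card_image_of_injective _ (fun a b h => (Prod.mk.injEq _ _ _ _).mp h |>.2)]
            exact key v
    · intro x _ y _ hxy
      refine disjoint_left.mpr fun p hp hp' => ?_
      simp only [mem_image] at hp hp'
      obtain ⟨t, _, rfl⟩ := hp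
      obtain ⟨t', _, h⟩ := hp'
      exact hxy ((Prod.mk.injEq _ _ _ _).mp h).1.symm
  -- the target set
  set T : Finset (Fin m → F) := univ.filter (fun a => a ≠ w₀ ∧ MvPolynomial.eval a f ≠ 0)
    with hT
  -- map P → T with fibers of size ≤ q - 1
  set φ : (Fin m → F) × F → (Fin m → F) := fun p => fun j => w₀ j + p.2 * p.1 j with hφ
  have himg : P.image φ ⊆ T := by
    intro a ha
    obtain ⟨p, hp, rfl⟩ := mem_image.mp ha
    rw [hPmem] at hp
    obtain ⟨h1, h2, h3⟩ := hp
    simp only [hT, mem_filter, mem_univ, true_and]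
    refine ⟨?_, h3⟩
    intro hcontra
    apply h1
    funext j
    have h5 := congrFun hcontra j
    simp only [hφ] at h5
    have h6 : p.2 * p.1 j = 0 := by
      have := add_eq_left.mp h5
      exact this
    exact (mul_eq_zero.mp h6).resolve_left h2
  -- fiber bound
  have hfib : P.card ≤ (q - 1) * (P.image φ).card := by
    refine Finset.card_le_mul_card_image P (q - 1) fun a _ => ?_
    have : ((P.filter fun p => φ p = a)).card ≤ (univ.erase (0 : F)).card := by
      refine Finset.card_le_card_of_injOn (fun p => p.2) ?_ ?_
      · intro p hp
        rw [mem_coe, mem_filter] at hp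
        have := (hPmem p).mp hp.1
        exact mem_erase.mpr ⟨this.2.1, mem_univ _⟩
      · intro p hp p' hp' hpp'
        have hpp2 : p.2 = p'.2 := hpp'
        rw [mem_coe, mem_filter] at hp hp'
        have h2 : p.2 ≠ 0 := ((hPmem p).mp hp.1).2.1
        have heq : φ p = φ p' := hp.2.trans hp'.2.symm
        have hv : p.1 = p'.1 := by
          funext j
          have := congrFun heq j
          simp only [hφ] at this
          have h7 : p.2 * p.1 j = p'.2 * p'.1 j := by
            exact add_left_cancel this
          rw [← hpp2] at h7
          exact mul_left_cancel₀ h2 h7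
        exact Prod.ext hv hpp2
    rwa [card_erase_of_mem (mem_univ _), card_univ, hF] at this
  -- combine
  have hTcard : (q ^ m - 1) * r ≤ (q - 1) * T.card := by
    calc (q ^ m - 1) * r ≤ P.card := hPlow
      _ ≤ (q - 1) * (P.image φ).card := hfib
      _ ≤ (q - 1) * T.card := Nat.mul_le_mul_left _ (card_le_card himg)
  have hQ : q ^ m = q ^ (m - 1) * q := by
    rw [← pow_succ]
    congr 1
    omega
  have hTlow : r * q ^ (m - 1) ≤ T.card := by
    have hqpos : 1 ≤ q ^ (m - 1) := Nat.one_le_pow _ _ (by omega)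
    refine Nat.le_of_mul_le_mul_left ?_ (show 0 < q - 1 by omega)
    calc (q - 1) * (r * q ^ (m - 1)) = (q ^ (m-1) * (q-1)) * r := by ring
      _ = (q ^ m - q ^ (m-1)) * r := by rw [Nat.mul_sub, hQ, mul_one]
      _ ≤ (q ^ m - 1) * r := Nat.mul_le_mul_right _ (by omega)
      _ ≤ (q - 1) * T.card := hTcard
  -- finish
  have hset : {a : Fin m → F | MvPolynomial.eval a f ≠ 0} =
      ↑(univ.filter fun a : Fin m → F => MvPolynomial.eval a f ≠ 0) := by
    ext a; simp
  rw [hset, Set.ncard_coe_finset]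
  have hsub : insert w₀ T ⊆ univ.filter fun a : Fin m → F => MvPolynomial.eval a f ≠ 0 := by
    intro a ha
    rcases mem_insert.mp ha with rfl | ha
    · simp [hw₀]
    · rw [hT, mem_filter] at ha
      simp [ha.2.2]
  have hw₀T : w₀ ∉ T := by simp [hT]
  calc 1 + r * q ^ (m - 1) ≤ 1 + T.card := by omega
    _ = (insert w₀ T).card := by rw [card_insert_of_notMem hw₀T]; omega
    _ ≤ _ := card_le_card hsub
end

section
/- Nonvanishing on many lines: let f ∈ F_q[X₁,...,X_m] and w₀ ∈ F_q^m, and suppose f^{(i₀)}(w₀) ≠ 0 for some multi-index i₀ with deg(i₀) = i₀ < s, where i₀ is minimal with this property among multi-indices of degree i₀. Then for at least (q − s)·q^{m−2} of the q^{m−1} directions of the form v = (1, v₂, ..., v_m) with v_j ∈ F_q, the univariate polynomial g_v(T) := f(w₀ + Tv) has a nonzero Hasse derivative g_v^{(deg(i₀))}(0), provided deg(i₀) ≤ s ≤ q. -/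
open Finset Polynomial

section Counting

lemma uni_count (F : Type) [Field F] [Fintype F] [DecidableEq F]
    (r : Polynomial F) (hr : r ≠ 0) :
    Fintype.card F ≤ (Finset.univ.filter (fun y : F => r.eval y ≠ 0)).card + r.natDegree := by
  have h1 : (Finset.univ.filter (fun y : F => r.eval y = 0)).card ≤ r.natDegree := by
    refine le_trans (le_trans (Finset.card_le_card ?_) r.roots.toFinset_card_le)
      (r.card_roots')
    intro y hy
    simp only [Finset.mem_filter, Finset.mem_univ, true_and] at hy
    exact Multiset.mem_toFinset.2 ((Polynomial.mem_roots hr).2 hy)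
  have h2 := Finset.card_filter_add_card_filter_not (s := (univ : Finset F))
    (p := fun y => r.eval y = 0)
  simp only [Finset.card_univ] at h2
  simp only [ne_eq]
  omega

lemma split_count (F : Type) [Field F] [Fintype F] [DecidableEq F] (n : ℕ)
    (p : MvPolynomial (Fin (n+1)) F) :
    (Finset.univ.filter (fun s : Fin n → F =>
      MvPolynomial.eval s (MvPolynomial.finSuccEquiv F n p).leadingCoeff ≠ 0)).card *
      (Fintype.card F - (MvPolynomial.finSuccEquiv F n p).natDegree) ≤
      (Finset.univ.filter (fun v : Fin (n+1) → F => MvPolynomial.eval v p ≠ 0)).card := by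
  classical
  set P := MvPolynomial.finSuccEquiv F n p with hP
  set t := P.natDegree
  set q := Fintype.card F
  set G := Finset.univ.filter (fun s : Fin n → F =>
      MvPolynomial.eval s P.leadingCoeff ≠ 0) with hG
  set T : Finset (Σ _ : Fin n → F, F) :=
    G.sigma (fun s => Finset.univ.filter
      (fun y : F => Polynomial.eval y (P.map (MvPolynomial.eval s)) ≠ 0)) with hT
  have hinj : T.card ≤ (Finset.univ.filter (fun v : Fin (n+1) → F =>
      MvPolynomial.eval v p ≠ 0)).card := by
    apply Finset.card_le_card_of_injOn (fun z => Fin.cons z.2 z.1)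
    · intro z hz
      simp only [hT, Finset.mem_coe, Finset.mem_sigma, hG, Finset.mem_filter, Finset.mem_univ,
        true_and] at hz ⊢
      rw [MvPolynomial.eval_eq_eval_mv_eval']
      exact hz.2
    · intro z _ z' _ h
      have h0 := congrFun h 0
      have h1 := congrArg Fin.tail h
      simp only [Fin.cons_zero] at h0
      simp only [Fin.tail_cons] at h1
      cases z; cases z'
      simp_all
  have hcard : T.card = ∑ s ∈ G, (Finset.univ.filter
      (fun y : F => Polynomial.eval y (P.map (MvPolynomial.eval s)) ≠ 0)).card :=
    Finset.card_sigma _ _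
  have hper : ∀ s ∈ G, q - t ≤ (Finset.univ.filter (fun y : F =>
        Polynomial.eval y (P.map (MvPolynomial.eval s)) ≠ 0)).card := by
    intro s hs
    simp only [hG, Finset.mem_filter, Finset.mem_univ, true_and] at hs
    have hrne : P.map (MvPolynomial.eval s) ≠ 0 := by
      intro h
      apply hs
      have h2 : (P.map (MvPolynomial.eval s)).coeff t = MvPolynomial.eval s (P.coeff t) :=
        Polynomial.coeff_map _ _
      rw [h, Polynomial.coeff_zero] at h2
      exact h2.symm
    have hdeg : (P.map (MvPolynomial.eval s)).natDegree ≤ t := Polynomial.natDegree_map_le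
    have := uni_count F (P.map (MvPolynomial.eval s)) hrne
    omega
  calc G.card * (q - t) ≤ ∑ s ∈ G, (Finset.univ.filter (fun y : F =>
        Polynomial.eval y (P.map (MvPolynomial.eval s)) ≠ 0)).card := by
        rw [← smul_eq_mul]
        exact Finset.card_nsmul_le_sum _ _ _ hper
    _ = T.card := hcard.symm
    _ ≤ _ := hinj

lemma count_nonzero (F : Type) [Field F] [Fintype F] [DecidableEq F] :
    ∀ (n d : ℕ), d ≤ Fintype.card F → ∀ p : MvPolynomial (Fin (n+1)) F, p ≠ 0 →
    p.totalDegree ≤ d →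
    Fintype.card F ^ (n+1) ≤
      (Finset.univ.filter (fun v : Fin (n+1) → F => MvPolynomial.eval v p ≠ 0)).card
        + d * Fintype.card F ^ n := by
  intro n
  induction n with
  | zero =>
    intro d hd p hp hdeg
    have hPne : MvPolynomial.finSuccEquiv F 0 p ≠ 0 :=
      (map_ne_zero_iff _ (MvPolynomial.finSuccEquiv F 0).injective).2 hp
    have htd : (MvPolynomial.finSuccEquiv F 0 p).natDegree ≤ d := by
      rw [MvPolynomial.natDegree_finSuccEquiv]
      exact le_trans (MvPolynomial.degreeOf_le_totalDegree p 0) hdeg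
    have hGall : Finset.univ.filter (fun s : Fin 0 → F =>
        MvPolynomial.eval s (MvPolynomial.finSuccEquiv F 0 p).leadingCoeff ≠ 0)
        = Finset.univ := by
      refine Finset.filter_true_of_mem (fun s _ => ?_)
      obtain ⟨a, ha⟩ := MvPolynomial.C_surjective (Fin 0)
        (MvPolynomial.finSuccEquiv F 0 p).leadingCoeff
      rw [← ha, MvPolynomial.eval_C]
      intro h
      exact Polynomial.leadingCoeff_ne_zero.2 hPne (by rw [← ha, h, map_zero])
    have hsc := split_count F 0 p
    rw [hGall, Finset.card_univ] at hsc
    have h1 : Fintype.card (Fin 0 → F) = 1 := by simp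
    rw [h1, one_mul] at hsc
    simp only [zero_add, pow_one, pow_zero, mul_one]
    omega
  | succ n ih =>
    intro d hd p hp hdeg
    have hPne : MvPolynomial.finSuccEquiv F (n+1) p ≠ 0 :=
      (map_ne_zero_iff _ (MvPolynomial.finSuccEquiv F (n+1)).injective).2 hp
    have htd : (MvPolynomial.finSuccEquiv F (n+1) p).natDegree ≤ d := by
      rw [MvPolynomial.natDegree_finSuccEquiv]
      exact le_trans (MvPolynomial.degreeOf_le_totalDegree p 0) hdeg
    set q := Fintype.card F with hq
    set P := MvPolynomial.finSuccEquiv F (n+1) p with hP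
    set t := P.natDegree with ht
    have hcne : P.leadingCoeff ≠ 0 := Polynomial.leadingCoeff_ne_zero.2 hPne
    have hlc : P.leadingCoeff = P.coeff t := rfl
    have hcdeg : P.leadingCoeff.totalDegree ≤ d - t := by
      have h2 := MvPolynomial.totalDegree_coeff_finSuccEquiv_add_le p t
        (by rw [← hlc]; exact hcne)
      rw [← hP, ← hlc] at h2
      omega
    have hIH := ih (d - t) (le_trans (Nat.sub_le _ _) hd) P.leadingCoeff hcne hcdeg
    have hsc := split_count F (n+1) p
    rw [← hP, ← ht, ← hq] at hsc
    set G := (Finset.univ.filter (fun s : Fin (n+1) → F =>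
      MvPolynomial.eval s P.leadingCoeff ≠ 0)).card
    set S := (Finset.univ.filter (fun v : Fin (n+2) → F =>
      MvPolynomial.eval v p ≠ 0)).card
    set Q := q ^ n with hQ
    have hpow1 : q ^ (n+1) = q * Q := by rw [hQ, pow_succ, mul_comm]
    have hpow2 : q ^ (n+2) = q * q * Q := by rw [hQ, pow_succ, pow_succ]; ring
    rw [hpow1] at hIH ⊢
    rw [hpow2]
    have key : (q - t) * (q * Q) ≤ (q - t) * (G + (d - t) * Q) :=
      Nat.mul_le_mul_left _ hIH
    have key2 : (q - t) * G ≤ S := by rw [mul_comm]; exact hsc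
    have expand : (q - t) * (G + (d - t) * Q) = (q - t) * G + (q - t) * (d - t) * Q := by ring
    have hbound : (q - t) * (d - t) * Q ≤ (d - t) * (q * Q) := by
      calc (q - t) * (d - t) * Q = (d - t) * ((q - t) * Q) := by ring
        _ ≤ (d - t) * (q * Q) :=
            Nat.mul_le_mul_left _ (Nat.mul_le_mul_right _ (Nat.sub_le _ _))
    have htw : t + (q - t) = q := by
      have : t ≤ q := le_trans htd hd
      omega
    have hsplit : q * q * Q = t * (q * Q) + (q - t) * (q * Q) := by
      rw [← add_mul, htw]; ring
    have hdt : t + (d - t) = d := by omega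
    have hdq : t * (q * Q) + (d - t) * (q * Q) = d * (q * Q) := by
      rw [← add_mul, hdt]
    omega

end Counting

section Algebra

lemma coeff_g_pow {m : ℕ} {F : Type} [CommRing F] (w : F) (j : Fin m) (n t : ℕ) :
    ((Polynomial.C (MvPolynomial.C w) + Polynomial.C (MvPolynomial.X j) * Polynomial.X) ^ n).coeff t
      = MvPolynomial.monomial (Finsupp.single j t) ((n.choose t : F) * w ^ (n - t)) := by
  rw [add_comm, add_pow, Polynomial.finset_sum_coeff]
  have hmv : ∀ k, MvPolynomial.X j ^ k * MvPolynomial.C w ^ (n-k) *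
      ((n.choose k : ℕ) : MvPolynomial (Fin m) F) =
      MvPolynomial.monomial (Finsupp.single j k) ((n.choose k : F) * w ^ (n-k)) := by
    intro k
    rw [← MvPolynomial.C_eq_coe_nat, MvPolynomial.X_pow_eq_monomial, ← MvPolynomial.C_pow,
      mul_assoc, ← map_mul, mul_comm, MvPolynomial.C_mul_monomial, mul_one]
    exact congrArg _ (mul_comm _ _)
  have hterm : ∀ k, ((Polynomial.C (MvPolynomial.X j : MvPolynomial (Fin m) F) * Polynomial.X) ^ k *
      Polynomial.C (MvPolynomial.C w) ^ (n - k) *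
        ((n.choose k : ℕ) : Polynomial (MvPolynomial (Fin m) F))).coeff t
      = if k = t then
          MvPolynomial.monomial (Finsupp.single j k) ((n.choose k : F) * w ^ (n - k)) else 0 := by
    intro k
    have hC : (Polynomial.C (MvPolynomial.X j : MvPolynomial (Fin m) F) * Polynomial.X) ^ k *
        Polynomial.C (MvPolynomial.C w) ^ (n - k) *
        ((n.choose k : ℕ) : Polynomial (MvPolynomial (Fin m) F)) =
        Polynomial.C (MvPolynomial.monomial (Finsupp.single j k) ((n.choose k : F) * w ^ (n - k)))
          * Polynomial.X ^ k := by
      rw [← hmv k, mul_pow, ← Polynomial.C_pow, ← Polynomial.C_pow, ← Polynomial.C_eq_natCast,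
        map_mul, map_mul]
      ring
    rw [hC, Polynomial.coeff_C_mul, Polynomial.coeff_X_pow]
    by_cases h : k = t
    · subst h; simp
    · rw [if_neg (fun hh => h hh.symm), if_neg h, mul_zero]
  rw [Finset.sum_congr rfl (fun k _ => hterm k),
    Finset.sum_ite_eq' (Finset.range (n+1)) t]
  split
  · rfl
  · rename_i h
    have hnt : n < t := by
      rcases Nat.lt_or_ge n t with h1 | h1
      · exact h1
      · exact absurd (Finset.mem_range.2 (by omega)) h
    rw [Nat.choose_eq_zero_of_lt hnt]
    simp

lemma prod_monomial' {m : ℕ} {F : Type} [CommRing F] (s : Finset (Fin m))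
    (σ : Fin m → (Fin m →₀ ℕ)) (c : Fin m → F) :
    ∏ j ∈ s, (MvPolynomial.monomial (σ j) (c j) : MvPolynomial (Fin m) F)
      = MvPolynomial.monomial (∑ j ∈ s, σ j) (∏ j ∈ s, c j) := by
  classical
  induction s using Finset.induction with
  | empty => simp
  | @insert a s h ih =>
    rw [Finset.prod_insert h, ih, MvPolynomial.monomial_mul, Finset.sum_insert h,
      Finset.prod_insert h]

lemma sum_single_eq {m : ℕ} (l : Fin m →₀ ℕ) : ∑ j, Finsupp.single j (l j) = l := by
  ext a
  rw [Finsupp.finset_sum_apply]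
  simp [Finsupp.single_apply]

lemma master {m k : ℕ} {F : Type} [CommRing F] (f : MvPolynomial (Fin m) F) (w₀ : Fin m → F) :
    (MvPolynomial.aeval (fun j => Polynomial.C (MvPolynomial.C (w₀ j)) +
        Polynomial.C (MvPolynomial.X j) * Polynomial.X) f :
      Polynomial (MvPolynomial (Fin m) F)).coeff k
    = ∑ l ∈ Finset.finsuppAntidiag (Finset.univ : Finset (Fin m)) k,
        MvPolynomial.monomial l (MvPolynomial.eval w₀ (mvHasseDeriv l f)) := by
  classical
  set g : Fin m → Polynomial (MvPolynomial (Fin m) F) := fun j =>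
    Polynomial.C (MvPolynomial.C (w₀ j)) + Polynomial.C (MvPolynomial.X j) * Polynomial.X with hg
  have hprod : ∀ d : Fin m →₀ ℕ,
      (∏ j, (g j) ^ (d j)).coeff k
        = ∑ l ∈ Finset.finsuppAntidiag (Finset.univ : Finset (Fin m)) k,
            MvPolynomial.monomial l (∏ j, (((d j).choose (l j) : F) * w₀ j ^ (d j - l j))) := by
    intro d
    have h1 : ((∏ j, (g j) ^ (d j) : Polynomial (MvPolynomial (Fin m) F)) :
        PowerSeries (MvPolynomial (Fin m) F)) =
        ∏ j, ((g j ^ (d j) : Polynomial (MvPolynomial (Fin m) F)) :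
          PowerSeries (MvPolynomial (Fin m) F)) := by
      rw [← Polynomial.coeToPowerSeries.ringHom_apply, map_prod]
      simp only [Polynomial.coeToPowerSeries.ringHom_apply]
    have h2 := PowerSeries.coeff_prod
      (fun j => ((g j ^ (d j) : Polynomial (MvPolynomial (Fin m) F)) :
        PowerSeries (MvPolynomial (Fin m) F))) k Finset.univ
    calc (∏ j, (g j) ^ (d j)).coeff k
        = PowerSeries.coeff k ((∏ j, (g j) ^ (d j) : Polynomial (MvPolynomial (Fin m) F)) :
            PowerSeries (MvPolynomial (Fin m) F)) := by rw [Polynomial.coeff_coe]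
      _ = ∑ l ∈ Finset.finsuppAntidiag (Finset.univ : Finset (Fin m)) k,
            ∏ j, PowerSeries.coeff (l j)
              ((g j ^ (d j) : Polynomial (MvPolynomial (Fin m) F)) :
                PowerSeries (MvPolynomial (Fin m) F)) := by rw [h1, h2]
      _ = _ := by
          refine Finset.sum_congr rfl (fun l hl => ?_)
          have : ∀ j : Fin m, PowerSeries.coeff (l j)
              ((g j ^ (d j) : Polynomial (MvPolynomial (Fin m) F)) :
                PowerSeries (MvPolynomial (Fin m) F))
              = MvPolynomial.monomial (Finsupp.single j (l j))
                  (((d j).choose (l j) : F) * w₀ j ^ (d j - l j)) := by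
            intro j
            rw [Polynomial.coeff_coe, hg]
            exact coeff_g_pow (w₀ j) j (d j) (l j)
          rw [Finset.prod_congr rfl (fun j _ => this j), prod_monomial', sum_single_eq]
  have haev : (MvPolynomial.aeval g f : Polynomial (MvPolynomial (Fin m) F)) =
      ∑ d ∈ f.support, (Polynomial.C (MvPolynomial.C (f.coeff d))) * ∏ j, g j ^ d j := by
    rw [MvPolynomial.aeval_def, MvPolynomial.eval₂_eq']
    refine Finset.sum_congr rfl (fun d _ => ?_)
    congr 1
  rw [haev, Polynomial.finset_sum_coeff]
  have hterm : ∀ d ∈ f.support,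
      ((Polynomial.C (MvPolynomial.C (f.coeff d))) * ∏ j, g j ^ d j).coeff k
        = ∑ l ∈ Finset.finsuppAntidiag (Finset.univ : Finset (Fin m)) k,
            MvPolynomial.monomial l
              (((∏ j, (d j).choose (l j) : ℕ) : F) * f.coeff d *
                (d - l).prod fun j e => w₀ j ^ e) := by
    intro d _
    rw [Polynomial.coeff_C_mul, hprod d, Finset.mul_sum]
    refine Finset.sum_congr rfl (fun l hl => ?_)
    rw [MvPolynomial.C_mul_monomial]
    congr 1
    rw [Finset.prod_mul_distrib, Finsupp.prod_fintype _ _ (fun j => pow_zero _), Nat.cast_prod]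
    have : ∀ j : Fin m, w₀ j ^ ((d - l) j) = w₀ j ^ (d j - l j) := by
      intro j; rw [Finsupp.tsub_apply]
    rw [Finset.prod_congr rfl (fun j _ => this j)]
    ring
  rw [Finset.sum_congr rfl hterm]
  have hrhs : ∀ l : Fin m →₀ ℕ,
      MvPolynomial.monomial l (MvPolynomial.eval w₀ (mvHasseDeriv l f))
        = ∑ d ∈ f.support, MvPolynomial.monomial l
            (((∏ j, (d j).choose (l j) : ℕ) : F) * f.coeff d *
              (d - l).prod fun j e => w₀ j ^ e) := by
    intro l
    rw [mvHasseDeriv, map_sum, ← map_sum (MvPolynomial.monomial l)]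
    refine congrArg _ (Finset.sum_congr rfl (fun d _ => ?_))
    rw [MvPolynomial.eval_monomial]
  rw [Finset.sum_congr rfl (fun l _ => hrhs l), Finset.sum_comm]

lemma hasse_eval_zero {F : Type} [CommRing F] (r : Polynomial F) (k : ℕ) :
    (Polynomial.hasseDeriv k r).eval 0 = r.coeff k := by
  rw [← Polynomial.coeff_zero_eq_eval_zero, Polynomial.hasseDeriv_coeff, zero_add,
    Nat.choose_self, Nat.cast_one, one_mul]

lemma map_aeval_eq {m : ℕ} {F : Type} [CommRing F] (w₀ v : Fin m → F)
    (f : MvPolynomial (Fin m) F) :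
    Polynomial.map (MvPolynomial.eval v)
      (MvPolynomial.aeval (fun j => Polynomial.C (MvPolynomial.C (w₀ j)) +
        Polynomial.C (MvPolynomial.X j) * Polynomial.X) f)
    = MvPolynomial.aeval (fun j => Polynomial.C (w₀ j) + Polynomial.C (v j) * Polynomial.X) f := by
  induction f using MvPolynomial.induction_on with
  | C a => simp
  | add p q hp hq => simp [hp, hq]
  | mul_X p j hp => simp [hp]

end Algebra

/-- Nonvanishing on many lines: if `f^{(i₀)}(w₀) ≠ 0` for a multi-index `i₀` of degree
`k < s ≤ q`, then for at least `(q − s)·q^{m−2}` directions `v = (1, v₂, …, v_m)` the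
restriction `g_v(T) = f(w₀ + Tv)` has `g_v^{(k)}(0) ≠ 0`. -/
theorem nonvanishing_on_many_lines (m q s k : ℕ) (hm : 2 ≤ m) (hsq : s ≤ q)
    (F : Type) [Field F] [Fintype F] (hF : Fintype.card F = q)
    (f : MvPolynomial (Fin m) F) (w₀ : Fin m → F)
    (i₀ : Fin m →₀ ℕ) (hdeg : (∑ j, i₀ j) = k) (hks : k < s)
    (h0 : MvPolynomial.eval w₀ (mvHasseDeriv i₀ f) ≠ 0) :
    (q - s) * q^(m-2) ≤ Set.ncard {v : Fin m → F | v ⟨0, by omega⟩ = 1 ∧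
      (Polynomial.hasseDeriv k
        ((MvPolynomial.aeval
          (fun j => Polynomial.C (w₀ j) + Polynomial.C (v j) * Polynomial.X) f :
          Polynomial F))).eval 0 ≠ 0} := by
  classical
  obtain ⟨n, rfl⟩ : ∃ n, m = n + 2 := ⟨m - 2, by omega⟩
  have hq : Fintype.card F = q := hF
  set A := Finset.finsuppAntidiag (Finset.univ : Finset (Fin (n+2))) k with hA
  set P : MvPolynomial (Fin (n+2)) F :=
    ∑ l ∈ A, MvPolynomial.monomial l (MvPolynomial.eval w₀ (mvHasseDeriv l f)) with hP
  set Q : MvPolynomial (Fin (n+1)) F :=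
    ∑ l ∈ A, MvPolynomial.monomial (Finsupp.tail l)
      (MvPolynomial.eval w₀ (mvHasseDeriv l f)) with hQ
  -- members of A sum to k
  have hmemA : ∀ l : Fin (n+2) →₀ ℕ, l ∈ A → ∑ j, l j = k := by
    intro l hl
    exact (Finset.mem_finsuppAntidiag.1 hl).1
  have hi₀A : i₀ ∈ A := Finset.mem_finsuppAntidiag.2 ⟨hdeg, Finset.subset_univ _⟩
  -- eval on lines vs Q
  have hQeval : ∀ u : Fin (n+1) → F,
      MvPolynomial.eval u Q = MvPolynomial.eval (Fin.cons 1 u) P := by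
    intro u
    rw [hP, hQ, map_sum, map_sum]
    refine Finset.sum_congr rfl (fun l _ => ?_)
    rw [MvPolynomial.eval_monomial, MvPolynomial.eval_monomial]
    congr 1
    rw [Finsupp.prod_fintype _ _ (fun j => pow_zero _),
      Finsupp.prod_fintype _ _ (fun j => pow_zero _)]
    conv_rhs => rw [Fin.prod_univ_succ]
    simp [Finsupp.tail_apply]
  -- Q nonzero
  have hQcoeff : MvPolynomial.coeff (Finsupp.tail i₀) Q
      = MvPolynomial.eval w₀ (mvHasseDeriv i₀ f) := by
    rw [hQ, MvPolynomial.coeff_sum, Finset.sum_eq_single i₀]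
    · rw [MvPolynomial.coeff_monomial, if_pos rfl]
    · intro l hl hne
      rw [MvPolynomial.coeff_monomial, if_neg]
      intro htail
      apply hne
      have hsl := hmemA l hl
      have hsi := hmemA i₀ hi₀A
      rw [Fin.sum_univ_succ] at hsl hsi
      have htt : ∀ i : Fin (n+1), l i.succ = i₀ i.succ := by
        intro i
        have := congrArg (fun t => t i) htail
        simpa [Finsupp.tail_apply] using this
      have hsum : ∑ i : Fin (n+1), l (Fin.succ i) = ∑ i : Fin (n+1), i₀ (Fin.succ i) :=
        Finset.sum_congr rfl (fun i _ => htt i)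
      have h00 : l 0 = i₀ 0 := by omega
      rw [← Finsupp.cons_tail l, ← Finsupp.cons_tail i₀, h00, htail]
    · intro h; exact absurd hi₀A h
  have hQne : Q ≠ 0 := fun h => h0 (by rw [← hQcoeff, h, MvPolynomial.coeff_zero])
  -- degree of Q
  have hQdeg : Q.totalDegree ≤ k := by
    rw [hQ]
    refine MvPolynomial.totalDegree_finsetSum_le (fun l hl => ?_)
    refine le_trans (MvPolynomial.totalDegree_monomial_le _ _) ?_
    have hsl := hmemA l hl
    rw [Fin.sum_univ_succ] at hsl
    rw [Finsupp.sum_fintype _ _ (fun i => rfl)]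
    simp only [id_eq]
    have : ∑ i : Fin (n+1), Finsupp.tail l i = ∑ i : Fin (n+1), l (Fin.succ i) :=
      Finset.sum_congr rfl (fun i _ => Finsupp.tail_apply _ _)
    omega
  -- counting
  have hcount := count_nonzero F n k (by omega) Q hQne hQdeg
  rw [hq] at hcount
  -- relate the set to the filter
  set T := Finset.univ.filter (fun u : Fin (n+1) → F => MvPolynomial.eval u Q ≠ 0) with hT
  set S := {v : Fin (n+2) → F | v ⟨0, by omega⟩ = 1 ∧
      (Polynomial.hasseDeriv k
        ((MvPolynomial.aeval
          (fun j => Polynomial.C (w₀ j) + Polynomial.C (v j) * Polynomial.X) f :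
          Polynomial F))).eval 0 ≠ 0} with hS
  have hkey : ∀ v : Fin (n+2) → F,
      (Polynomial.hasseDeriv k
        ((MvPolynomial.aeval
          (fun j => Polynomial.C (w₀ j) + Polynomial.C (v j) * Polynomial.X) f :
          Polynomial F))).eval 0 = MvPolynomial.eval v P := by
    intro v
    rw [hasse_eval_zero, ← map_aeval_eq w₀ v f, Polynomial.coeff_map, master, ← hA, ← hP]
  have hfin : S.Finite := Set.toFinite _
  have hle : T.card ≤ hfin.toFinset.card := by
    refine Finset.card_le_card_of_injOn (fun u => Fin.cons 1 u) ?_ ?_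
    · intro u hu
      simp only [hT, Finset.mem_coe, Finset.mem_filter] at hu
      rw [Finset.mem_coe, Set.Finite.mem_toFinset, hS]
      constructor
      · show (Fin.cons 1 u : Fin (n+2) → F) ⟨0, by omega⟩ = 1
        have : (⟨0, by omega⟩ : Fin (n+2)) = 0 := rfl
        rw [this, Fin.cons_zero]
      · rw [hkey, ← hQeval]
        exact hu.2
    · intro a _ b _ h
      exact Fin.cons_right_injective _ h
  rw [Set.ncard_eq_toFinset_card _ hfin]
  have harith : (q - s) * q ^ n ≤ T.card := by
    have h2 : (q - s) * q ^ n + k * q ^ n ≤ q * q ^ n := by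
      rw [← add_mul]
      exact Nat.mul_le_mul_right _ (by omega)
    have h3 : q ^ (n+1) = q * q ^ n := by rw [pow_succ, mul_comm]
    omega
  show (q - s) * q ^ n ≤ hfin.toFinset.card
  omega
end

section
/- Counting lower bound for bad monomials via bit concatenation: let q' = 2^{ℓ'}, r < q = 2^ℓ with ℓ = ℓ' + ⌈log₂(r+m)⌉, and suppose d' ∈ (Z_{q'})^m admits i' ≤₂ d' with deg(i') = q' − 1. Form d ∈ (Z_q)^m by appending to each component of d' (in binary) the all-one string of length ⌈log₂(m+r)⌉ − ⌊log₂ r⌋ followed by any binary string of length ⌊log₂ r⌋. Then there exists i ∈ (Z_q)^m with i ≤₂ d and q − r ≤ deg(i) ≤ q − 1. -/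
/-- Counting lower bound for bad monomials via bit concatenation: if `d' ∈ (Z_{q'})^m`
admits `i' ≤₂ d'` with `deg(i') = q' − 1`, and `d` is obtained from `d'` by appending to
each component the all-one string of length `⌈log₂(m+r)⌉ − ⌊log₂ r⌋` followed by an
arbitrary string of length `⌊log₂ r⌋`, then `d` admits `i ≤₂ d` with
`q − r ≤ deg(i) ≤ q − 1` where `q = 2^{ℓ' + ⌈log₂(r+m)⌉}`. -/
theorem bad_monomial_concatenation (m ℓ' r : ℕ) (hm : 1 ≤ m) (hr : 1 ≤ r)
    (q' : ℕ) (hq' : q' = 2^ℓ')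
    (t b : ℕ) (ht : t = Nat.clog 2 (r + m)) (hb : b = Nat.log 2 r)
    (q : ℕ) (hq : q = 2^(ℓ' + t)) (hrq : r < q)
    (d' i' : Fin m → ℕ) (hd' : ∀ j, d' j < q') (hi' : ∀ j, i' j < q')
    (hle : ∀ j k, (i' j).testBit k = true → (d' j).testBit k = true)
    (hsum : ∑ j, i' j = q' - 1)
    (c : Fin m → ℕ) (hc : ∀ j, c j < 2^b)
    (d : Fin m → ℕ)
    (hd : ∀ j, d j = (d' j * 2^(t-b) + (2^(t-b) - 1)) * 2^b + c j) :
    ∃ i : Fin m → ℕ, (∀ j, i j < q) ∧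
      (∀ j k, (i j).testBit k = true → (d j).testBit k = true) ∧
      q - r ≤ ∑ j, i j ∧ ∑ j, i j ≤ q - 1 := by
  -- basic inequalities
  have h2br : 2 ^ b ≤ r := hb ▸ Nat.pow_log_le_self 2 (by omega)
  have hrm2t : r + m ≤ 2 ^ t := ht ▸ Nat.le_pow_clog one_lt_two _
  have hbt : b ≤ t := by
    by_contra h
    have : 2 ^ t < 2 ^ b := Nat.pow_lt_pow_right one_lt_two (by omega)
    omega
  have h2t2 : 2 ^ (t - b) * 2 ^ b = 2 ^ t := by
    rw [← pow_add]; congr 1; omega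
  have hqq : q = q' * 2 ^ t := by rw [hq, hq', pow_add]
  have h1b : 1 ≤ 2 ^ b := Nat.one_le_two_pow
  have h1tb : 1 ≤ 2 ^ (t - b) := Nat.one_le_two_pow
  -- the mask of ones
  set mask : ℕ := 2 ^ t - 2 ^ b with hmask
  have hmask' : mask = 2 ^ b * (2 ^ (t - b) - 1) + 0 := by
    rw [add_zero, Nat.mul_sub, mul_one, mul_comm, h2t2]
  have hmasklt : mask < 2 ^ t := by omega
  -- rewrite d j
  have hkey : 2 ^ b * (2 ^ (t - b) - 1) = 2 ^ t - 2 ^ b := by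
    rw [Nat.mul_sub, mul_one, mul_comm, h2t2]
  have hkey' : (2 ^ (t - b) - 1) * 2 ^ b = 2 ^ t - 2 ^ b := by
    rw [Nat.sub_mul, one_mul, h2t2]
  have hd2 : ∀ j, d j = 2 ^ t * d' j + (2 ^ b * (2 ^ (t - b) - 1) + c j) := by
    intro j
    rw [hd j, add_mul, mul_assoc, h2t2, hkey', hkey]
    ring
  have hmclt : ∀ j, 2 ^ b * (2 ^ (t - b) - 1) + c j < 2 ^ t := by
    intro j
    have := hc j
    omega
  -- define the witness
  let j0 : Fin m := ⟨0, hm⟩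
  refine ⟨fun j => 2 ^ t * i' j + (if j = j0 then mask else 0), ?_, ?_, ?_⟩
  · intro j
    have h1 : (if j = j0 then mask else 0) < 2 ^ t := by
      split <;> [exact hmasklt; positivity]
    have h2 : i' j + 1 ≤ q' := hi' j
    calc 2 ^ t * i' j + (if j = j0 then mask else 0)
        < 2 ^ t * (i' j + 1) := by rw [Nat.mul_add, mul_one]; omega
      _ ≤ 2 ^ t * q' := Nat.mul_le_mul_left _ h2
      _ = q := by rw [hqq, mul_comm]
  · intro j k hk
    rw [hd2 j]
    rw [Nat.testBit_two_pow_mul_add _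
      (by split <;> [exact hmasklt; positivity] : (if j = j0 then mask else 0) < 2 ^ t)] at hk
    rw [Nat.testBit_two_pow_mul_add _ (hmclt j)]
    split at hk <;> rename_i hkt <;> simp only [hkt, if_pos, if_neg]
    · -- low part
      split at hk
      · rw [hmask'] at hk
        rw [Nat.testBit_two_pow_mul_add _ (by positivity : (0:ℕ) < 2 ^ b)] at hk
        rw [Nat.testBit_two_pow_mul_add _ (hc j)]
        split at hk <;> rename_i hkb
        · simp at hk
        · rw [if_neg hkb]; exact hk
      · simp at hk
    · exact hle j _ hk
  · -- sum bounds
    have hsum2 : ∑ j, (2 ^ t * i' j + (if j = j0 then mask else 0))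
        = 2 ^ t * (q' - 1) + mask := by
      rw [Finset.sum_add_distrib, ← Finset.mul_sum, hsum,
        Finset.sum_ite_eq' Finset.univ j0 (fun _ => mask),
        if_pos (Finset.mem_univ j0)]
    rw [hsum2]
    have hq'1 : 1 ≤ q' := by rw [hq']; exact Nat.one_le_two_pow
    have he : 2 ^ t * (q' - 1) = q' * 2 ^ t - 2 ^ t := by
      rw [Nat.mul_sub, mul_one, mul_comm]
    have hle2 : 2 ^ t ≤ q' * 2 ^ t := Nat.le_mul_of_pos_left _ (by omega)
    omega
end

section
/- Decomposition of bad monomials for lifted multiplicity codes: let q and s be powers of two with m ≤ s ≤ q and m < r < q. If d ∈ (Z_{qs})^m satisfies deg_q(d) := Σ_j ⌊d_j/q⌋ ≤ s−1 and there exists i ∈ (Z_{qs})^m with i ≤₂ d and qs − r ≤ deg(i) ≤ qs − 1, then writing d_j = ĥ_j q + d'_j with d'_j ∈ Z_q, the vector ĥ = (ĥ_1,...,ĥ_m) satisfies s − m ≤ deg(ĥ) ≤ s − 1, and there exists i' ∈ (Z_q)^m with i' ≤₂ d' and deg(i') mod q ∈ {q−r mod q, ..., q−1} (i.e., deg(i')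 ≡ q − r₀ (mod q) for some r₀ ∈ [r]). -/
/-- Decomposition of bad monomials for lifted multiplicity codes: if a type-`s` vector
`d ∈ (Z_{qs})^m` admits `i ≤₂ d` with `qs − r ≤ deg(i) ≤ qs − 1`, then writing
`d_j = ĥ_j q + d'_j` with `d'_j < q`, the high part satisfies `s − m ≤ deg(ĥ) ≤ s − 1`
and the low part `d'` admits `i' ≤₂ d'` with `deg(i') ≡ q − r₀ (mod q)` for some
`r₀ ∈ [r]`. -/
theorem bad_monomial_decomposition (ℓ t m q s r : ℕ)
    (hq : q = 2^ℓ) (hs : s = 2^t) (hms : m ≤ s) (hsq : s ≤ q)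
    (hmr : m < r) (hrq : r < q)
    (d : Fin m → ℕ) (hd : ∀ j, d j < q*s)
    (htype : (∑ j, d j / q) ≤ s - 1)
    (i : Fin m → ℕ) (hi : ∀ j, i j < q*s)
    (hle : ∀ j k, (i j).testBit k = true → (d j).testBit k = true)
    (hlow : q*s - r ≤ ∑ j, i j) (hhigh : ∑ j, i j ≤ q*s - 1) :
    (s - m ≤ ∑ j, d j / q ∧ ∑ j, d j / q ≤ s - 1) ∧
    ∃ i' : Fin m → ℕ, (∀ j, i' j < q) ∧
      (∀ j k, (i' j).testBit k = true → (d j % q).testBit k = true) ∧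
      ∃ r₀ : ℕ, 1 ≤ r₀ ∧ r₀ ≤ r ∧ (∑ j, i' j) % q = (q - r₀) % q := by
  have hspos : 1 ≤ s := hs ▸ Nat.one_le_two_pow
  have hqpos : 1 ≤ q := hq ▸ Nat.one_le_two_pow
  -- bitwise dominance implies ≤
  have hij : ∀ j, i j ≤ d j := by
    intro j
    have hand : i j &&& d j = i j := by
      apply Nat.eq_of_testBit_eq
      intro k
      rw [Nat.testBit_and]
      cases h : (i j).testBit k with
      | true => simp [hle j k h]
      | false => simp
    calc i j = i j &&& d j := hand.symm
      _ ≤ d j := Nat.and_le_right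
  have hsum_le : (∑ j, i j) ≤ ∑ j, d j := Finset.sum_le_sum fun j _ => hij j
  -- decomposition of sum of d
  have hdec : (∑ j, d j) = q * (∑ j, d j / q) + ∑ j, d j % q := by
    rw [Finset.mul_sum, ← Finset.sum_add_distrib]
    exact Finset.sum_congr rfl fun j _ => (Nat.div_add_mod (d j) q).symm
  have hmod_le : (∑ j, d j % q) ≤ m * (q - 1) := by
    calc (∑ j, d j % q) ≤ ∑ _j : Fin m, (q - 1) :=
          Finset.sum_le_sum fun j _ => Nat.le_sub_one_of_lt (Nat.mod_lt _ hqpos)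
      _ = m * (q - 1) := by simp [Finset.sum_const, Finset.card_univ]
  -- lower bound on high degree
  have hlowdeg : s - m ≤ ∑ j, d j / q := by
    have h2 : q * s - r ≤ ∑ j, d j := le_trans hlow hsum_le
    have h3 : (∑ j, d j) ≤ q * (∑ j, d j / q) + m * (q - 1) := by
      rw [hdec]; exact Nat.add_le_add_left hmod_le _
    have hrqs : r ≤ q * s := le_trans hrq.le (Nat.le_mul_of_pos_right q hspos)
    have h4 : q * s ≤ q * (∑ j, d j / q) + m * (q - 1) + r := by omega
    have h5 : m * (q - 1) + r < m * q + q :=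
      Nat.add_lt_add_of_le_of_lt (Nat.mul_le_mul_left m (Nat.sub_le q 1)) hrq
    have h6 : q * s < q * ((∑ j, d j / q) + m + 1) := by
      have : q * ((∑ j, d j / q) + m + 1) = q * (∑ j, d j / q) + m * q + q := by ring
      omega
    have h7 : s < (∑ j, d j / q) + m + 1 := Nat.lt_of_mul_lt_mul_left h6
    omega
  refine ⟨⟨hlowdeg, htype⟩, fun j => i j % q, fun j => Nat.mod_lt _ hqpos, ?_, ?_⟩
  · intro j k hk
    rw [hq, Nat.testBit_mod_two_pow] at hk ⊢
    simp only [Bool.and_eq_true, decide_eq_true_eq] at hk ⊢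
    exact ⟨hk.1, hle j k hk.2⟩
  · refine ⟨q * s - ∑ j, i j, ?_, ?_, ?_⟩
    · have : 1 ≤ q * s := Nat.one_le_iff_ne_zero.mpr (by positivity)
      omega
    · omega
    · have hmodsum : (∑ j, i j % q) % q = (∑ j, i j) % q :=
        (Finset.sum_nat_mod _ _ _).symm
      rw [hmodsum]
      have hr0lt : q * s - (∑ j, i j) < q := by
        have : q * s - r ≤ ∑ j, i j := hlow
        omega
      have hr0pos : 1 ≤ q * s - (∑ j, i j) := by
        have : 1 ≤ q * s := Nat.one_le_iff_ne_zero.mpr (by positivity)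
        omega
      have hsplit : (∑ j, i j) = q * (s - 1) + (q - (q * s - ∑ j, i j)) := by
        have hqs1 : q * s = q * (s - 1) + q := by
          rw [← Nat.mul_succ]
          congr 1
          omega
        omega
      conv_lhs => rw [hsplit]
      rw [Nat.mul_add_mod]
end
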